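/- Let N ≥ 1, let F ∈ Faisc^N(ℝ²) be an N-beam and let 0 < μ ≤ 1. Set t_a := (1−μ)/2 and t_b := (1+μ)/2, and define the subbeam F_μ := ((x_i),(y_i)) by x_0 = y_0 := (−1,0) and x_i := P_i^{t_a}, y_i := P_i^{t_b} for 1 ≤ i ≤ N+1, where P_t is the t-polygonal chain of F. Then F_μ is an N-beam, F_1 = F, and the map H : [0,1] → Faisc^N(ℝ²), H(t) := F_{1 + t(μ−1)}, is a continuous path from F to F_μ; in particular F and F_μ are homotopic beams. -/

import Mathlib

open Real Set
open scoped Classical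

noncomputable section

abbrev Pt : Type := EuclideanSpace ℝ (Fin 2)

noncomputable def pt (x y : ℝ) : Pt := (WithLp.equiv 2 (Fin 2 → ℝ)).symm ![x, y]

def dot (u v : Pt) : ℝ := u 0 * v 0 + u 1 * v 1

noncomputable def nvec (θ : Real.Angle) : Pt := pt (-θ.sin) θ.cos

noncomputable def dirvec (θ : Real.Angle) : Pt := pt θ.cos θ.sin

noncomputable def angleOf (v : Pt) : Real.Angle := ((Complex.arg ⟨v 0, v 1⟩ : ℝ) : Real.Angle)

/-- The space of `N`-polygonal chains `(ℝ²)^{N+2}`. -/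
abbrev Chain (N : ℕ) := Fin (N + 2) → Pt

/-- Access the `i`-th point of a chain (junk value `0` out of range). -/
def cg {N : ℕ} (c : Chain N) (i : ℕ) : Pt := if h : i < N + 2 then c ⟨i, h⟩ else 0

/-- The `j`-th ray of a chain: `R_0 = (c_0,c_1]`, `R_j = [c_j, c_{j+1}]`. -/
def ray {N : ℕ} (c : Chain N) (j : ℕ) : Set Pt :=
  if j = 0 then segment ℝ (cg c 0) (cg c 1) \ {cg c 0}
  else segment ℝ (cg c j) (cg c (j + 1))

def Obscured {N : ℕ} (c : Chain N) : Prop :=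
  cg c 0 = cg c 1 ∨
    ∃ j k : ℕ, j ≤ N ∧ 1 ≤ k ∧ k ≤ N + 1 ∧ k ≠ j ∧ k ≠ j + 1 ∧ cg c k ∈ ray c j

def Grazing {N : ℕ} (c : Chain N) : Prop :=
  ∃ i : ℕ, 1 ≤ i ∧ i ≤ N ∧ cg c i ∈ openSegment ℝ (cg c (i - 1)) (cg c (i + 1))

/-- Obscuration-free, non-grazing chains. -/
def LO (N : ℕ) : Set (Chain N) := {c | ¬Obscured c ∧ ¬Grazing c}

/-- Access the angle of the `j`-th mirror, `1 ≤ j ≤ N` (junk out of range). -/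
def θg {N : ℕ} (θ : Fin N → Real.Angle) (j : ℕ) : Real.Angle :=
  if h : j - 1 < N then θ ⟨j - 1, h⟩ else 0

/-- Reflexion condition: at each mirror both adjacent dot products with `n(θ_j)`
are nonzero and of the same sign. -/
def IsReflexive {N : ℕ} (c : Chain N) (θ : Fin N → Real.Angle) : Prop :=
  ∀ j : ℕ, 1 ≤ j → j ≤ N →
    0 < dot (cg c (j + 1) - cg c j) (nvec (θg θ j)) *
        dot (cg c (j - 1) - cg c j) (nvec (θg θ j))

abbrev RChain (N : ℕ) := Chain N × (Fin N → Real.Angle)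

/-- The space of reflexive polygonal chains. -/
def LR (N : ℕ) : Set (RChain N) := {L | L.1 ∈ LO N ∧ IsReflexive L.1 L.2}

/-- The open arc `α + ε·(0,π)` in `ℝ/2πℤ`. -/
def arc (α : Real.Angle) (ε : ℤ) : Set Real.Angle :=
  {β | ∃ s : ℝ, 0 < s ∧ s < π ∧ β = α + (((ε : ℝ) * s : ℝ) : Real.Angle)}

/-- Positive orientation set of the `j`-th mirror. -/
def APlus {N : ℕ} (c : Chain N) (j : ℕ) : Set Real.Angle :=
  arc (angleOf (cg c j - cg c (j - 1))) ((-1) ^ j) ∩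
    arc (angleOf (cg c j - cg c (j + 1))) ((-1) ^ j)

/-- Negative orientation set of the `j`-th mirror. -/
def AMinus {N : ℕ} (c : Chain N) (j : ℕ) : Set Real.Angle :=
  arc (angleOf (cg c j - cg c (j - 1))) ((-1) ^ (j + 1)) ∩
    arc (angleOf (cg c j - cg c (j + 1))) ((-1) ^ (j + 1))

/-- The characteristic: index `j : Fin N` corresponds to the `(j+1)`-st mirror. -/
noncomputable def Car {N : ℕ} (L : RChain N) : Fin N → ℤ :=
  fun j => if θg L.2 (j.1 + 1) ∈ APlus L.1 (j.1 + 1) then 1 else -1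

abbrev Beam (N : ℕ) := Chain N × Chain N

def IsPrimaryBeam {N : ℕ} (F : Beam N) : Prop :=
  (∀ k : ℕ, 1 ≤ k → k ≤ N → cg F.1 k ≠ cg F.2 k) ∧
  cg F.1 0 = pt (-1) 0 ∧ cg F.2 0 = pt (-1) 0 ∧
  cg F.1 (N + 1) = cg F.2 (N + 1) ∧
  midpoint ℝ (cg F.1 1) (cg F.2 1) = pt 0 0

def lineThrough (p q : Pt) : Set Pt := {x | ∃ u : ℝ, x = p + u • (q - p)}

noncomputable def pickPt (S : Set Pt) : Pt := if h : S.Nonempty then h.choose else 0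

noncomputable def pickR (S : Set ℝ) : ℝ := if h : S.Nonempty then h.choose else 0

/-- `impact F t k` is the `(k+1)`-st impact point `P_{k+1}^t` of the `t`-polygonal chain. -/
noncomputable def impact {N : ℕ} (F : Beam N) (t : ℝ) : ℕ → Pt
  | 0 => (1 - t) • cg F.1 1 + t • cg F.2 1
  | k + 1 =>
    let i := k + 2
    let prev := impact F t k
    if (lineThrough (cg F.1 (i - 1)) (cg F.1 i) ∩
        lineThrough (cg F.2 (i - 1)) (cg F.2 i)).Nonempty then
      pickPt (lineThrough prev
          (pickPt (lineThrough (cg F.1 (i - 1)) (cg F.1 i) ∩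
            lineThrough (cg F.2 (i - 1)) (cg F.2 i))) ∩
        segment ℝ (cg F.1 i) (cg F.2 i))
    else
      (1 - pickR {l : ℝ | prev = (1 - l) • cg F.1 (i - 1) + l • cg F.2 (i - 1)}) • cg F.1 i +
        pickR {l : ℝ | prev = (1 - l) • cg F.1 (i - 1) + l • cg F.2 (i - 1)} • cg F.2 i

/-- The `t`-polygonal chain `P_t` of a (primary) beam. -/
noncomputable def tChain {N : ℕ} (F : Beam N) (t : ℝ) : Chain N :=
  fun i => if (i : ℕ) = 0 then impact F t 0 + pt (-1) 0 else impact F t ((i : ℕ) - 1)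

/-- The `k`-th mirror `S_k = [a_k, b_k]` of a beam. -/
def mirror {N : ℕ} (F : Beam N) (k : ℕ) : Set Pt := segment ℝ (cg F.1 k) (cg F.2 k)

def NonObscuration {N : ℕ} (F : Beam N) : Prop :=
  ∀ j : ℕ, j ≤ N → ∀ t ∈ Icc (0 : ℝ) 1, ∀ k : ℕ,
    1 ≤ k → k ≤ N + 1 → k ≠ j → k ≠ j + 1 → ray (tChain F t) j ∩ mirror F k = ∅

/-- Four reals are nonzero and of the same sign. -/
def SameSign₄ (x y z w : ℝ) : Prop := 0 < x * y ∧ 0 < x * z ∧ 0 < x * w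

/-- A unit normal vector to the direction `u`. -/
noncomputable def normalOf (u : Pt) : Pt := ‖u‖⁻¹ • pt (-u 1) (u 0)

def ReflexionCond {N : ℕ} (F : Beam N) : Prop :=
  ∀ i : ℕ, 1 ≤ i → i ≤ N →
    SameSign₄
      (dot (cg F.1 (i - 1) - cg F.1 i) (normalOf (cg F.2 i - cg F.1 i)))
      (dot (cg F.2 (i - 1) - cg F.2 i) (normalOf (cg F.2 i - cg F.1 i)))
      (dot (cg F.1 (i + 1) - cg F.1 i) (normalOf (cg F.2 i - cg F.1 i)))
      (dot (cg F.2 (i + 1) - cg F.2 i) (normalOf (cg F.2 i - cg F.1 i)))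

/-- The space of `N`-beams. -/
def Faisc (N : ℕ) : Set (Beam N) :=
  {F | IsPrimaryBeam F ∧ NonObscuration F ∧ ReflexionCond F}

/-- The centered polygonal chain `M(F) = P_{1/2}`. -/
noncomputable def MF {N : ℕ} (F : Beam N) : Chain N := tChain F (1 / 2)

/-- The reflexive polygonal chain induced by a beam. -/
noncomputable def MR {N : ℕ} (F : Beam N) : RChain N :=
  (MF F, fun j => angleOf (cg F.1 (j.1 + 1) - cg F.2 (j.1 + 1)))

/-- The characteristic of a beam. -/
noncomputable def CarF {N : ℕ} (F : Beam N) : Fin N → ℤ := Car (MR F)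

/-- The pair of polygonal chains `P_l(L)` built from a reflexive chain and mirror
half-lengths `la, lb` (indexed by `1 ≤ j ≤ N`). -/
noncomputable def Pl {N : ℕ} (L : RChain N) (la lb : ℕ → ℝ) : Beam N :=
  (fun i => if 1 ≤ (i : ℕ) ∧ (i : ℕ) ≤ N
      then L.1 i + la (i : ℕ) • dirvec (θg L.2 (i : ℕ)) else L.1 i,
   fun i => if 1 ≤ (i : ℕ) ∧ (i : ℕ) ≤ N
      then L.1 i - lb (i : ℕ) • dirvec (θg L.2 (i : ℕ)) else L.1 i)

/-- Minimal mirror-to-mirror distance of a reflexive chain. -/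
noncomputable def dR {N : ℕ} (L : RChain N) : ℝ :=
  sInf {r | ∃ i : ℕ, 1 ≤ i ∧ i ≤ N ∧
    r = min |dot (cg L.1 (i - 1) - cg L.1 i) (nvec (θg L.2 i))|
          |dot (cg L.1 (i + 1) - cg L.1 i) (nvec (θg L.2 i))|}

/-- Minimal distance from the non-adjacent mirrors to the rays. -/
noncomputable def dO {N : ℕ} (L : RChain N) : ℝ :=
  sInf {r | ∃ j k : ℕ, j ≤ N ∧ 1 ≤ k ∧ k ≤ N + 1 ∧ k ≠ j ∧ k ≠ j + 1 ∧
    r = Metric.infDist (cg L.1 k) (ray L.1 j)}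

/-- `K = max_{1 ≤ j ≤ N} max (la j) (lb j)`. -/
noncomputable def Kmax (N : ℕ) (la lb : ℕ → ℝ) : ℝ :=
  sSup {r | ∃ j : ℕ, 1 ≤ j ∧ j ≤ N ∧ r = max (la j) (lb j)}

/-- The subbeam `F_μ` of a beam. -/
noncomputable def subBeam {N : ℕ} (F : Beam N) (μ : ℝ) : Beam N :=
  (fun i => if (i : ℕ) = 0 then pt (-1) 0 else tChain F ((1 - μ) / 2) i,
   fun i => if (i : ℕ) = 0 then pt (-1) 0 else tChain F ((1 + μ) / 2) i)
section Basics

lemma pt_apply0 (x y : ℝ) : pt x y 0 = x := rfl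
lemma pt_apply1 (x y : ℝ) : pt x y 1 = y := rfl

lemma Pt.ext2 {u v : Pt} (h0 : u 0 = v 0) (h1 : u 1 = v 1) : u = v := by
  ext i
  fin_cases i <;> assumption

lemma pt_add_apply (u v : Pt) (i : Fin 2) : (u + v) i = u i + v i := rfl
lemma pt_sub_apply (u v : Pt) (i : Fin 2) : (u - v) i = u i - v i := rfl
lemma pt_smul_apply (r : ℝ) (u : Pt) (i : Fin 2) : (r • u) i = r * u i := rfl
lemma pt_zero_apply (i : Fin 2) : (0 : Pt) i = 0 := rfl

lemma dot_sub_left (u v w : Pt) : dot (u - v) w = dot u w - dot v w := by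
  simp [dot, pt_sub_apply]; ring
lemma dot_add_left (u v w : Pt) : dot (u + v) w = dot u w + dot v w := by
  simp [dot, pt_add_apply]; ring
lemma dot_smul_left (r : ℝ) (u w : Pt) : dot (r • u) w = r * dot u w := by
  simp [dot, pt_smul_apply]; ring
lemma dot_smul_right (r : ℝ) (u w : Pt) : dot u (r • w) = r * dot u w := by
  simp [dot, pt_smul_apply]; ring
lemma dot_self_nonneg (u : Pt) : 0 ≤ dot u u := by
  simp only [dot]; nlinarith [sq_nonneg (u 0), sq_nonneg (u 1)]
lemma dot_self_pos {u : Pt} (hu : u ≠ 0) : 0 < dot u u := by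
  rcases (dot_self_nonneg u).lt_or_eq with h | h
  · exact h
  · exfalso; apply hu; apply Pt.ext2 <;>
      [skip; skip] <;> nlinarith [sq_nonneg (u 0), sq_nonneg (u 1),
        (by simpa [dot] using h.symm : u 0 * u 0 + u 1 * u 1 = 0), pt_zero_apply 0, pt_zero_apply 1]

/-- unnormalized normal vector -/
noncomputable def nvv (u : Pt) : Pt := pt (-(u 1)) (u 0)

lemma nvv_smul (c : ℝ) (u : Pt) : nvv (c • u) = c • nvv u := by
  apply Pt.ext2 <;> simp [nvv, pt_apply0, pt_apply1, pt_smul_apply]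

lemma dot_nvv_self (u : Pt) : dot u (nvv u) = 0 := by
  simp [dot, nvv, pt_apply0, pt_apply1]; ring

lemma normalOf_eq (u : Pt) : normalOf u = ‖u‖⁻¹ • nvv u := rfl

lemma norm_pos_of_ne {u : Pt} (hu : u ≠ 0) : 0 < ‖u‖ := norm_pos_iff.mpr hu

end Basics

section Lines

lemma left_mem_lineThrough (p q : Pt) : p ∈ lineThrough p q := ⟨0, by simp⟩
lemma right_mem_lineThrough (p q : Pt) : q ∈ lineThrough p q := ⟨1, by simp⟩

lemma pickPt_mem {S : Set Pt} (h : S.Nonempty) : pickPt S ∈ S := by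
  rw [pickPt, dif_pos h]; exact h.choose_spec

lemma pickPt_singleton (x : Pt) : pickPt {x} = x := by
  have h : ({x} : Set Pt).Nonempty := ⟨x, rfl⟩
  have := pickPt_mem h
  simpa using this

lemma pickR_singleton (x : ℝ) : pickR {x} = x := by
  have h : ({x} : Set ℝ).Nonempty := ⟨x, rfl⟩
  have : pickR {x} ∈ ({x} : Set ℝ) := by rw [pickR, dif_pos h]; exact h.choose_spec
  simpa using this

/-- affine functional -/
noncomputable def gf (A n x : Pt) : ℝ := dot (x - A) n

lemma gf_line {p q x : Pt} (A n : Pt) (hx : x ∈ lineThrough p q) :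
    ∃ u : ℝ, x = p + u • (q - p) ∧ gf A n x = gf A n p + u * (gf A n q - gf A n p) := by
  obtain ⟨u, hu⟩ := hx
  refine ⟨u, hu, ?_⟩
  subst hu
  simp only [gf]
  have e : p + u • (q - p) - A = (p - A) + u • (q - p) := by module
  have e2 : dot (q - p) n = dot (q - A) n - dot (p - A) n := by
    rw [← dot_sub_left]; congr 1; module
  rw [e, dot_add_left, dot_smul_left, e2]
  try ring

lemma gf_affine (A n p q : Pt) (u : ℝ) :
    gf A n (p + u • (q - p)) = gf A n p + u * (gf A n q - gf A n p) := by
  simp only [gf]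
  have e : p + u • (q - p) - A = (p - A) + u • (q - p) := by module
  have e2 : dot (q - p) n = dot (q - A) n - dot (p - A) n := by
    rw [← dot_sub_left]; congr 1; module
  rw [e, dot_add_left, dot_smul_left, e2]
  try ring

lemma gf_combo (A n x y : Pt) (a b : ℝ) (hab : a + b = 1) :
    gf A n (a • x + b • y) = a * gf A n x + b * gf A n y := by
  simp only [gf]
  have e : a • x + b • y - A = a • (x - A) + b • (y - A) := by
    have h : a • x + b • y - A = a • (x - A) + b • (y - A) + (a + b - 1) • A := by module
    rw [hab] at h; simpa using h
  rw [e, dot_add_left, dot_smul_left, dot_smul_left]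

lemma gf_self (A n : Pt) : gf A n A = 0 := by simp [gf, dot]

/-- on a line through p, an affine functional nonzero at p has at most one zero -/
lemma line_zero_unique {p q x y A n : Pt} (hp : gf A n p ≠ 0)
    (hx : x ∈ lineThrough p q) (hy : y ∈ lineThrough p q)
    (hx0 : gf A n x = 0) (hy0 : gf A n y = 0) : x = y := by
  obtain ⟨u, hxu, hxg⟩ := gf_line A n hx
  obtain ⟨v, hyu, hyg⟩ := gf_line A n hy
  have hne : gf A n q - gf A n p ≠ 0 := by
    intro h
    rw [h] at hxg; rw [hx0] at hxg; simp at hxg; exact hp hxg.symm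
  have huv : u = v := by
    have h1 : u * (gf A n q - gf A n p) = - gf A n p := by rw [hxg] at hx0; linarith
    have h2 : v * (gf A n q - gf A n p) = - gf A n p := by rw [hyg] at hy0; linarith
    have := h1.trans h2.symm
    exact mul_right_cancel₀ hne this
  rw [hxu, hyu, huv]

lemma lineThrough_eq_of_mem {p q r : Pt} (hr : r ∈ lineThrough p q) (hrp : r ≠ p) :
    lineThrough p r = lineThrough p q := by
  obtain ⟨u, rfl⟩ := hr
  have hu0 : u ≠ 0 := by rintro rfl; simp at hrp
  ext x
  constructor
  · rintro ⟨v, rfl⟩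
    exact ⟨v * u, by module⟩
  · rintro ⟨w, rfl⟩
    exact ⟨w / u, by match_scalars <;> (field_simp; try ring)⟩

lemma segment_sub_zero {Ai Bi x : Pt} {n : Pt} (hA : gf Ai n Ai = 0) (hB : gf Ai n Bi = 0)
    (hx : x ∈ segment ℝ Ai Bi) : gf Ai n x = 0 := by
  obtain ⟨a, b, ha, hb, hab, rfl⟩ := hx
  rw [gf_combo _ _ _ _ _ _ hab, hA, hB]; ring

end Lines

section Coord

lemma mem_segment_iff' {A B x : Pt} :
    x ∈ segment ℝ A B ↔ ∃ θ : ℝ, 0 ≤ θ ∧ θ ≤ 1 ∧ x = (1 - θ) • A + θ • B := by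
  constructor
  · rintro ⟨a, b, ha, hb, hab, rfl⟩
    exact ⟨b, hb, by linarith, by rw [show (1:ℝ) - b = a by linarith]⟩
  · rintro ⟨θ, h0, h1, rfl⟩
    exact ⟨1 - θ, θ, by linarith, h0, by ring, rfl⟩

noncomputable def co (A B x : Pt) : ℝ := dot (x - A) (B - A) / dot (B - A) (B - A)

lemma co_combo {A B : Pt} (h : A ≠ B) (θ : ℝ) : co A B ((1 - θ) • A + θ • B) = θ := by
  have hBA : B - A ≠ 0 := sub_ne_zero.mpr (Ne.symm h)
  have hd : dot (B - A) (B - A) ≠ 0 := ne_of_gt (dot_self_pos hBA)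
  have e : (1 - θ) • A + θ • B - A = θ • (B - A) := by module
  rw [co, e, dot_smul_left]
  field_simp

lemma combo_inj {A B : Pt} (h : A ≠ B) {θ τ : ℝ}
    (he : (1 - θ) • A + θ • B = (1 - τ) • A + τ • B) : θ = τ := by
  have := congrArg (co A B) he
  rwa [co_combo h, co_combo h] at this

lemma continuous_dot_right (n : Pt) : Continuous fun x : Pt => dot x n := by
  have h0 : Continuous fun x : Pt => x 0 :=
    (EuclideanSpace.proj (0 : Fin 2) : Pt →L[ℝ] ℝ).continuous
  have h1 : Continuous fun x : Pt => x 1 :=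
    (EuclideanSpace.proj (1 : Fin 2) : Pt →L[ℝ] ℝ).continuous
  exact ((h0.mul continuous_const).add (h1.mul continuous_const) : _)

lemma continuous_gf (A n : Pt) : Continuous fun x : Pt => gf A n x := by
  simp only [gf]
  exact (continuous_dot_right n).comp (continuous_id.sub continuous_const)

lemma continuous_co (A B : Pt) : Continuous fun x : Pt => co A B x := by
  simp only [co]
  exact ((continuous_dot_right (B - A)).comp (continuous_id.sub continuous_const)).div_const _

lemma lines_meet {p q r s : Pt}
    (h : (q 0 - p 0) * (s 1 - r 1) - (q 1 - p 1) * (s 0 - r 0) ≠ 0) :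
    (lineThrough p q ∩ lineThrough r s).Nonempty := by
  refine ⟨p + (((r 0 - p 0) * (s 1 - r 1) - (r 1 - p 1) * (s 0 - r 0)) /
      ((q 0 - p 0) * (s 1 - r 1) - (q 1 - p 1) * (s 0 - r 0))) • (q - p), ⟨_, rfl⟩,
    ((r 0 - p 0) * (q 1 - p 1) - (r 1 - p 1) * (q 0 - p 0)) /
      ((q 0 - p 0) * (s 1 - r 1) - (q 1 - p 1) * (s 0 - r 0)), ?_⟩
  apply Pt.ext2 <;>
  · simp only [pt_add_apply, pt_smul_apply, pt_sub_apply]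
    set D := (q 0 - p 0) * (s 1 - r 1) - (q 1 - p 1) * (s 0 - r 0) with hD
    field_simp
    rw [hD]
    ring

lemma det_zero_parallel {u v : Pt} (hu : u ≠ 0) (h : u 0 * v 1 - u 1 * v 0 = 0) :
    v = (dot u v / dot u u) • u := by
  have hd : dot u u ≠ 0 := ne_of_gt (dot_self_pos hu)
  apply Pt.ext2
  · simp only [pt_smul_apply]
    rw [div_mul_eq_mul_div, eq_comm, div_eq_iff hd]
    simp only [dot]
    linear_combination (u 1) * h
  · simp only [pt_smul_apply]
    rw [div_mul_eq_mul_div, eq_comm, div_eq_iff hd]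
    simp only [dot]
    linear_combination (-(u 0)) * h

lemma seg_sign {A n x y z : Pt} (hxy : 0 < gf A n x * gf A n y)
    (hz : z ∈ segment ℝ x y) : 0 < gf A n x * gf A n z := by
  obtain ⟨θ, h0, h1, rfl⟩ := mem_segment_iff'.mp hz
  rw [gf_combo _ _ _ _ _ _ (by ring : (1 - θ) + θ = 1)]
  have hx0 : gf A n x ≠ 0 := by intro h; rw [h] at hxy; simp at hxy
  have hx2 : 0 < gf A n x * gf A n x := mul_self_pos.mpr hx0
  rcases le_or_gt (1/2) θ with h | h
  · nlinarith
  · nlinarith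

end Coord

section BeamHelpers

lemma pt_zero : pt 0 0 = (0 : Pt) := by
  apply Pt.ext2 <;> rfl

lemma prod_pos_trans {a b c : ℝ} (h1 : 0 < a * b) (h2 : 0 < a * c) : 0 < b * c := by
  nlinarith [mul_pos h1 h2, mul_self_nonneg a]

lemma ne_of_gf {A n x y : Pt} (hx : gf A n x = 0) (hy : gf A n y ≠ 0) : x ≠ y := by
  intro h; rw [h] at hx; exact hy hx

lemma left_ne_of_prod {a b : ℝ} (h : 0 < a * b) : a ≠ 0 := by
  intro h0; rw [h0] at h; simp at h

lemma right_ne_of_prod {a b : ℝ} (h : 0 < a * b) : b ≠ 0 := by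
  intro h0; rw [h0] at h; simp at h

lemma line_hit0 {P R z A n : Pt} (hP : gf A n P = 0) (hR : gf A n R ≠ 0)
    (hz : z ∈ lineThrough P R) (hz0 : gf A n z = 0) : z = P := by
  obtain ⟨u, hu, hgu⟩ := gf_line A n hz
  rw [hP, hz0] at hgu
  have hu0 : u = 0 := by
    rcases mul_eq_zero.mp (by linarith : u * (gf A n R - 0) = 0) with h | h
    · exact h
    · exact absurd (by linarith : gf A n R = 0) hR
  rw [hu, hu0]; simp

lemma line_flip {p q z : Pt} (hz : z ∈ lineThrough p q) (hzq : z ≠ q) :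
    p ∈ lineThrough z q := by
  obtain ⟨u, rfl⟩ := hz
  have hu1 : u ≠ 1 := by rintro rfl; simp at hzq
  have h : (1 : ℝ) - u ≠ 0 := fun h => hu1 (by linarith)
  have h' : u - 1 ≠ 0 := sub_ne_zero.mpr hu1
  exact ⟨u / (u - 1), by match_scalars <;> (field_simp; try ring)⟩

lemma impact_zero {N : ℕ} (F : Beam N) (t : ℝ) :
    impact F t 0 = (1 - t) • cg F.1 1 + t • cg F.2 1 := rfl

lemma impact_succ_pos {N : ℕ} (F : Beam N) (t : ℝ) (k : ℕ)
    (h : (lineThrough (cg F.1 (k+1)) (cg F.1 (k+2)) ∩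
      lineThrough (cg F.2 (k+1)) (cg F.2 (k+2))).Nonempty) :
    impact F t (k+1) = pickPt (lineThrough (impact F t k)
      (pickPt (lineThrough (cg F.1 (k+1)) (cg F.1 (k+2)) ∩
        lineThrough (cg F.2 (k+1)) (cg F.2 (k+2)))) ∩
      segment ℝ (cg F.1 (k+2)) (cg F.2 (k+2))) := by
  show (if _ : _ then _ else _) = _
  simp only [show k + 2 - 1 = k + 1 from rfl]
  rw [dif_pos h]

lemma impact_succ_neg {N : ℕ} (F : Beam N) (t : ℝ) (k : ℕ)
    (h : ¬ (lineThrough (cg F.1 (k+1)) (cg F.1 (k+2)) ∩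
      lineThrough (cg F.2 (k+1)) (cg F.2 (k+2))).Nonempty) :
    impact F t (k+1) =
      (1 - pickR {l : ℝ | impact F t k = (1 - l) • cg F.1 (k+1) + l • cg F.2 (k+1)}) •
        cg F.1 (k+2) +
      pickR {l : ℝ | impact F t k = (1 - l) • cg F.1 (k+1) + l • cg F.2 (k+1)} •
        cg F.2 (k+2) := by
  show (if _ : _ then _ else _) = _
  simp only [show k + 2 - 1 = k + 1 from rfl]
  rw [dif_neg h]

/-- signed height above mirror i -/
noncomputable def hh {N : ℕ} (F : Beam N) (i : ℕ) (x : Pt) : ℝ :=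
  gf (cg F.1 i) (nvv (cg F.2 i - cg F.1 i)) x

lemma hh_A {N : ℕ} (F : Beam N) (i : ℕ) : hh F i (cg F.1 i) = 0 := gf_self _ _
lemma hh_B {N : ℕ} (F : Beam N) (i : ℕ) : hh F i (cg F.2 i) = 0 := dot_nvv_self _

lemma hh_seg {N : ℕ} (F : Beam N) (i : ℕ) {x : Pt}
    (hx : x ∈ segment ℝ (cg F.1 i) (cg F.2 i)) : hh F i x = 0 :=
  segment_sub_zero (hh_A F i) (hh_B F i) hx

lemma beam_refl {N : ℕ} {F : Beam N} (hF : F ∈ Faisc N) {i : ℕ} (h1 : 1 ≤ i) (h2 : i ≤ N) :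
    0 < hh F i (cg F.1 (i-1)) * hh F i (cg F.2 (i-1)) ∧
    0 < hh F i (cg F.1 (i-1)) * hh F i (cg F.1 (i+1)) ∧
    0 < hh F i (cg F.1 (i-1)) * hh F i (cg F.2 (i+1)) := by
  have hs := hF.2.2 i h1 h2
  have hAB : cg F.1 i ≠ cg F.2 i := hF.1.1 i h1 h2
  have hu : cg F.2 i - cg F.1 i ≠ 0 := sub_ne_zero.mpr (Ne.symm hAB)
  have hc : (0:ℝ) < ‖cg F.2 i - cg F.1 i‖⁻¹ := inv_pos.mpr (norm_pos_of_ne hu)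
  set c := ‖cg F.2 i - cg F.1 i‖⁻¹ with hcdef
  have e1 : dot (cg F.1 (i-1) - cg F.1 i) (normalOf (cg F.2 i - cg F.1 i)) =
      c * hh F i (cg F.1 (i-1)) := by
    rw [normalOf_eq, dot_smul_right]; rfl
  have key : ∀ x : Pt, dot (x - cg F.2 i) (normalOf (cg F.2 i - cg F.1 i)) =
      c * hh F i x := by
    intro x
    rw [normalOf_eq, dot_smul_right]
    congr 1
    have e : x - cg F.2 i = (x - cg F.1 i) - (cg F.2 i - cg F.1 i) := by module
    rw [e, dot_sub_left, dot_nvv_self, sub_zero]; rfl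
  have key1 : ∀ x : Pt, dot (x - cg F.1 i) (normalOf (cg F.2 i - cg F.1 i)) =
      c * hh F i x := by
    intro x; rw [normalOf_eq, dot_smul_right]; rfl
  obtain ⟨s1, s2, s3⟩ := hs
  simp only [key, key1] at s1 s2 s3
  refine ⟨?_, ?_, ?_⟩ <;> nlinarith [mul_pos hc hc]

end BeamHelpers

section ChainMain

lemma pickPt_empty {S : Set Pt} (h : ¬ S.Nonempty) : pickPt S = 0 := dif_neg h

lemma tChain_cg {N : ℕ} (F : Beam N) (t : ℝ) {i : ℕ} (h1 : 1 ≤ i) (h2 : i < N+2) :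
    cg (tChain F t) i = impact F t (i-1) := by
  rw [cg, dif_pos h2]
  show (if i = 0 then _ else impact F t (i-1)) = impact F t (i-1)
  rw [if_neg (by omega)]

lemma tChain_cg0 {N : ℕ} (F : Beam N) (t : ℝ) :
    cg (tChain F t) 0 = impact F t 0 + pt (-1) 0 := by
  rw [cg, dif_pos (by omega : 0 < N+2)]
  show (if 0 = 0 then impact F t 0 + pt (-1) 0 else _) = _
  rw [if_pos rfl]

theorem chain_main {N : ℕ} {F : Beam N} (hF : F ∈ Faisc N) :
    ∀ k : ℕ, k + 1 ≤ N →
      (∀ t ∈ Icc (0:ℝ) 1, impact F t k ∈ segment ℝ (cg F.1 (k+1)) (cg F.2 (k+1))) ∧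
      impact F 0 k = cg F.1 (k+1) ∧ impact F 1 k = cg F.2 (k+1) ∧
      ContinuousOn (fun t => impact F t k) (Icc (0:ℝ) 1) ∧
      InjOn (fun t => impact F t k) (Icc (0:ℝ) 1) := by
  intro k
  induction k with
  | zero =>
    intro h1
    have hAB : cg F.1 1 ≠ cg F.2 1 := hF.1.1 1 le_rfl h1
    refine ⟨?_, ?_, ?_, ?_, ?_⟩
    · intro t ht
      rw [impact_zero]
      exact mem_segment_iff'.mpr ⟨t, ht.1, ht.2, rfl⟩
    · rw [impact_zero]; module
    · rw [impact_zero]; module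
    · simp only [impact_zero]
      exact (((continuous_const.sub continuous_id).smul continuous_const).add
        (continuous_id.smul continuous_const)).continuousOn
    · intro s _ t _ h
      simp only [impact_zero] at h
      exact combo_inj hAB h
  | succ k IH =>
    intro hk2
    have hk1 : k + 1 ≤ N := by omega
    obtain ⟨hseg, h0, h1, hcont, hinj⟩ := IH hk1
    have hAB1 : cg F.1 (k+1) ≠ cg F.2 (k+1) := hF.1.1 (k+1) (by omega) hk1
    have hAB2 : cg F.1 (k+2) ≠ cg F.2 (k+2) := hF.1.1 (k+2) (by omega) hk2
    have rp2 := beam_refl hF (i := k+2) (by omega) hk2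
    have rp1 := beam_refl hF (i := k+1) (by omega) hk1
    simp only [hh, show k+2-1 = k+1 from rfl, show k+1-1 = k from rfl,
      show k+1+1 = k+2 from rfl, show k+2+1 = k+3 from rfl] at rp1 rp2
    -- notation: g2 = gf (cg F.1 (k+2)) n2, g1 = gf (cg F.1 (k+1)) n1
    have hg2A2 : gf (cg F.1 (k+2)) (nvv (cg F.2 (k+2) - cg F.1 (k+2))) (cg F.1 (k+2)) = 0 :=
      gf_self _ _
    have hg2B2 : gf (cg F.1 (k+2)) (nvv (cg F.2 (k+2) - cg F.1 (k+2))) (cg F.2 (k+2)) = 0 :=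
      dot_nvv_self _
    have hg1A1 : gf (cg F.1 (k+1)) (nvv (cg F.2 (k+1) - cg F.1 (k+1))) (cg F.1 (k+1)) = 0 :=
      gf_self _ _
    have hg1B1 : gf (cg F.1 (k+1)) (nvv (cg F.2 (k+1) - cg F.1 (k+1))) (cg F.2 (k+1)) = 0 :=
      dot_nvv_self _
    have hg2A1 : gf (cg F.1 (k+2)) (nvv (cg F.2 (k+2) - cg F.1 (k+2))) (cg F.1 (k+1)) ≠ 0 :=
      left_ne_of_prod rp2.1
    have hg2B1 : gf (cg F.1 (k+2)) (nvv (cg F.2 (k+2) - cg F.1 (k+2))) (cg F.2 (k+1)) ≠ 0 :=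
      right_ne_of_prod rp2.1
    have hg1A2 : gf (cg F.1 (k+1)) (nvv (cg F.2 (k+1) - cg F.1 (k+1))) (cg F.1 (k+2)) ≠ 0 :=
      right_ne_of_prod rp1.2.1
    have hg1A2B2 : 0 < gf (cg F.1 (k+1)) (nvv (cg F.2 (k+1) - cg F.1 (k+1))) (cg F.1 (k+2)) *
        gf (cg F.1 (k+1)) (nvv (cg F.2 (k+1) - cg F.1 (k+1))) (cg F.2 (k+2)) :=
      prod_pos_trans rp1.2.1 rp1.2.2
    have hg2prev : ∀ t ∈ Icc (0:ℝ) 1,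
        0 < gf (cg F.1 (k+2)) (nvv (cg F.2 (k+2) - cg F.1 (k+2))) (cg F.1 (k+1)) *
          gf (cg F.1 (k+2)) (nvv (cg F.2 (k+2) - cg F.1 (k+2))) (impact F t k) :=
      fun t ht => seg_sign rp2.1 (hseg t ht)
    have hg1prev : ∀ t ∈ Icc (0:ℝ) 1,
        gf (cg F.1 (k+1)) (nvv (cg F.2 (k+1) - cg F.1 (k+1))) (impact F t k) = 0 :=
      fun t ht => segment_sub_zero hg1A1 hg1B1 (hseg t ht)
    by_cases hQ : (lineThrough (cg F.1 (k+1)) (cg F.1 (k+2)) ∩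
        lineThrough (cg F.2 (k+1)) (cg F.2 (k+2))).Nonempty
    · -- branch 1
      obtain ⟨Q, hQdef⟩ : ∃ Q, Q = pickPt (lineThrough (cg F.1 (k+1)) (cg F.1 (k+2)) ∩
          lineThrough (cg F.2 (k+1)) (cg F.2 (k+2))) := ⟨_, rfl⟩
      have hQm := pickPt_mem hQ
      rw [← hQdef] at hQm
      obtain ⟨hQa, hQb⟩ := hQm
      have hQ2 : gf (cg F.1 (k+2)) (nvv (cg F.2 (k+2) - cg F.1 (k+2))) Q ≠ 0 := by
        intro h0
        have hA : Q = cg F.1 (k+2) :=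
          line_zero_unique hg2A1 hQa (right_mem_lineThrough _ _) h0 hg2A2
        have hB : Q = cg F.2 (k+2) :=
          line_zero_unique hg2B1 hQb (right_mem_lineThrough _ _) h0 hg2B2
        exact hAB2 (hA ▸ hB ▸ rfl)
      have hQ1 : gf (cg F.1 (k+1)) (nvv (cg F.2 (k+1) - cg F.1 (k+1))) Q ≠ 0 := by
        intro h0
        have hA : Q = cg F.1 (k+1) := line_hit0 hg1A1 hg1A2 hQa h0
        have hB : Q = cg F.2 (k+1) :=
          line_hit0 hg1B1 (right_ne_of_prod (prod_pos_trans rp1.1 rp1.2.2)) hQb h0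
        exact hAB1 (hA ▸ hB ▸ rfl)
      have hSne : ∀ t ∈ Icc (0:ℝ) 1,
          (lineThrough (impact F t k) Q ∩ segment ℝ (cg F.1 (k+2)) (cg F.2 (k+2))).Nonempty := by
        intro t ht
        by_contra hS
        have himp : impact F t (k+1) = 0 := by
          rw [impact_succ_pos F t k hQ, ← hQdef]
          exact pickPt_empty hS
        have hNO := hF.2.1 (k+2) hk2 t ht 1 le_rfl (by omega) (by omega) (by omega)
        have h0ray : (0:Pt) ∈ ray (tChain F t) (k+2) := by
          rw [ray, if_neg (by omega : ¬ (k+2) = 0)]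
          rw [tChain_cg F t (by omega) (by omega : k+2 < N+2)]
          rw [show k+2-1 = k+1 from rfl, himp]
          exact left_mem_segment ℝ _ _
        have h0m : (0:Pt) ∈ mirror F 1 := by
          rw [mirror, ← pt_zero, ← hF.1.2.2.2.2]
          exact midpoint_mem_segment _ _
        have : (0:Pt) ∈ ray (tChain F t) (k+2) ∩ mirror F 1 := ⟨h0ray, h0m⟩
        rw [hNO] at this
        exact this
      have hSin : ∀ t ∈ Icc (0:ℝ) 1, impact F t (k+1) ∈
          lineThrough (impact F t k) Q ∩ segment ℝ (cg F.1 (k+2)) (cg F.2 (k+2)) := by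
        intro t ht
        rw [impact_succ_pos F t k hQ, ← hQdef]
        exact pickPt_mem (hSne t ht)
      have hSsub : ∀ t ∈ Icc (0:ℝ) 1, ∀ z ∈
          lineThrough (impact F t k) Q ∩ segment ℝ (cg F.1 (k+2)) (cg F.2 (k+2)),
          z = impact F t (k+1) := by
        intro t ht z hz
        exact line_zero_unique (right_ne_of_prod (hg2prev t ht)) hz.1 (hSin t ht).1
          (segment_sub_zero hg2A2 hg2B2 hz.2) (segment_sub_zero hg2A2 hg2B2 (hSin t ht).2)
      have hQA1 : Q ≠ cg F.1 (k+1) := fun h => hQ1 (h ▸ hg1A1)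
      have hQB1 : Q ≠ cg F.2 (k+1) := fun h => hQ1 (h ▸ hg1B1)
      have h0Icc : (0:ℝ) ∈ Icc (0:ℝ) 1 := by norm_num
      have h1Icc : (1:ℝ) ∈ Icc (0:ℝ) 1 := by norm_num
      refine ⟨fun t ht => (hSin t ht).2, ?_, ?_, ?_, ?_⟩
      · -- impact F 0 (k+1) = A2
        refine (hSsub 0 h0Icc (cg F.1 (k+2)) ⟨?_, left_mem_segment ℝ _ _⟩).symm
        rw [h0, lineThrough_eq_of_mem hQa hQA1]
        exact right_mem_lineThrough _ _
      · refine (hSsub 1 h1Icc (cg F.2 (k+2)) ⟨?_, right_mem_segment ℝ _ _⟩).symm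
        rw [h1, lineThrough_eq_of_mem hQb hQB1]
        exact right_mem_lineThrough _ _
      · -- continuity
        have hden : ∀ t ∈ Icc (0:ℝ) 1,
            gf (cg F.1 (k+2)) (nvv (cg F.2 (k+2) - cg F.1 (k+2))) (impact F t k) - gf (cg F.1 (k+2)) (nvv (cg F.2 (k+2) - cg F.1 (k+2))) Q ≠ 0 := by
          intro t ht hd
          obtain ⟨u, hu, hgu⟩ := gf_line (cg F.1 (k+2)) (nvv (cg F.2 (k+2) - cg F.1 (k+2)))
            (hSin t ht).1
          have hz0 : gf (cg F.1 (k+2)) (nvv (cg F.2 (k+2) - cg F.1 (k+2))) (impact F t (k+1)) = 0 :=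
            segment_sub_zero hg2A2 hg2B2 (hSin t ht).2
          rw [hz0] at hgu
          have h1' : gf (cg F.1 (k+2)) (nvv (cg F.2 (k+2) - cg F.1 (k+2))) Q - gf (cg F.1 (k+2)) (nvv (cg F.2 (k+2) - cg F.1 (k+2))) (impact F t k) = 0 := by linarith
          rw [h1', mul_zero, add_zero] at hgu
          exact right_ne_of_prod (hg2prev t ht) hgu.symm
        have heq : ∀ t ∈ Icc (0:ℝ) 1, impact F t (k+1) = impact F t k +
            (gf (cg F.1 (k+2)) (nvv (cg F.2 (k+2) - cg F.1 (k+2))) (impact F t k) / (gf (cg F.1 (k+2)) (nvv (cg F.2 (k+2) - cg F.1 (k+2))) (impact F t k) - gf (cg F.1 (k+2)) (nvv (cg F.2 (k+2) - cg F.1 (k+2))) Q)) • (Q - impact F t k) := by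
          intro t ht
          have hgP := right_ne_of_prod (hg2prev t ht)
          have hd := hden t ht
          have hz0 : gf (cg F.1 (k+2)) (nvv (cg F.2 (k+2) - cg F.1 (k+2))) (impact F t (k+1)) = 0 :=
            segment_sub_zero hg2A2 hg2B2 (hSin t ht).2
          have hy0 : gf (cg F.1 (k+2)) (nvv (cg F.2 (k+2) - cg F.1 (k+2))) (impact F t k +
              (gf (cg F.1 (k+2)) (nvv (cg F.2 (k+2) - cg F.1 (k+2))) (impact F t k) / (gf (cg F.1 (k+2)) (nvv (cg F.2 (k+2) - cg F.1 (k+2))) (impact F t k) - gf (cg F.1 (k+2)) (nvv (cg F.2 (k+2) - cg F.1 (k+2))) Q)) • (Q - impact F t k)) = 0 := by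
            rw [gf_affine]
            field_simp
            ring
          exact line_zero_unique hgP (hSin t ht).1 ⟨_, rfl⟩ hz0 hy0
        have hgc : ContinuousOn (fun t => gf (cg F.1 (k+2)) (nvv (cg F.2 (k+2) - cg F.1 (k+2))) (impact F t k)) (Icc (0:ℝ) 1) :=
          (continuous_gf _ _).comp_continuousOn hcont
        have hC : ContinuousOn (fun t => impact F t k +
            (gf (cg F.1 (k+2)) (nvv (cg F.2 (k+2) - cg F.1 (k+2))) (impact F t k) / (gf (cg F.1 (k+2)) (nvv (cg F.2 (k+2) - cg F.1 (k+2))) (impact F t k) - gf (cg F.1 (k+2)) (nvv (cg F.2 (k+2) - cg F.1 (k+2))) Q)) • (Q - impact F t k))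
            (Icc (0:ℝ) 1) :=
          hcont.add (((hgc.div (hgc.sub continuousOn_const) hden)).smul
            (continuousOn_const.sub hcont))
        exact hC.congr fun t ht => heq t ht
      · -- injectivity
        intro s hs t ht he'
        have he : impact F s (k+1) = impact F t (k+1) := he'
        have hgz : gf (cg F.1 (k+2)) (nvv (cg F.2 (k+2) - cg F.1 (k+2)))
            (impact F s (k+1)) = 0 := segment_sub_zero hg2A2 hg2B2 (hSin s hs).2
        have hPQ : impact F s (k+1) ≠ Q := ne_of_gf hgz hQ2
        have hps : impact F s k ∈ lineThrough (impact F s (k+1)) Q :=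
          line_flip (hSin s hs).1 hPQ
        have hpt : impact F t k ∈ lineThrough (impact F s (k+1)) Q := by
          have := (hSin t ht).1
          rw [← he] at this
          exact line_flip this hPQ
        have hg1P : gf (cg F.1 (k+1)) (nvv (cg F.2 (k+1) - cg F.1 (k+1)))
            (impact F s (k+1)) ≠ 0 :=
          right_ne_of_prod (seg_sign hg1A2B2 (hSin s hs).2)
        have hprev : impact F s k = impact F t k :=
          line_zero_unique hg1P hps hpt (hg1prev s hs) (hg1prev t ht)
        exact hinj hs ht hprev
    · -- branch 2
      have key : ∀ t ∈ Icc (0:ℝ) 1, ∃ θ : ℝ, 0 ≤ θ ∧ θ ≤ 1 ∧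
          impact F t k = (1-θ) • cg F.1 (k+1) + θ • cg F.2 (k+1) ∧
          impact F t (k+1) = (1-θ) • cg F.1 (k+2) + θ • cg F.2 (k+2) ∧
          θ = co (cg F.1 (k+1)) (cg F.2 (k+1)) (impact F t k) := by
        intro t ht
        obtain ⟨θ, h0θ, h1θ, hrep⟩ := mem_segment_iff'.mp (hseg t ht)
        refine ⟨θ, h0θ, h1θ, hrep, ?_, by rw [hrep, co_combo hAB1]⟩
        rw [impact_succ_neg F t k hQ]
        have hset : {l : ℝ | impact F t k = (1 - l) • cg F.1 (k+1) + l • cg F.2 (k+1)} = {θ} := by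
          ext l
          simp only [mem_setOf_eq, mem_singleton_iff]
          constructor
          · intro h
            exact combo_inj hAB1 (h.symm.trans hrep)
          · rintro rfl; exact hrep
        rw [hset, pickR_singleton]
      refine ⟨?_, ?_, ?_, ?_, ?_⟩
      · intro t ht
        obtain ⟨θ, h0θ, h1θ, _, himp, _⟩ := key t ht
        exact mem_segment_iff'.mpr ⟨θ, h0θ, h1θ, himp⟩
      · obtain ⟨θ, _, _, hrep, himp, _⟩ := key 0 (by norm_num)
        have hθ : θ = 0 := by
          rw [h0] at hrep
          have : (1-(0:ℝ)) • cg F.1 (k+1) + (0:ℝ) • cg F.2 (k+1) =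
              (1-θ) • cg F.1 (k+1) + θ • cg F.2 (k+1) := by
            rw [← hrep]; module
          exact (combo_inj hAB1 this).symm
        rw [himp, hθ]; module
      · obtain ⟨θ, _, _, hrep, himp, _⟩ := key 1 (by norm_num)
        have hθ : θ = 1 := by
          rw [h1] at hrep
          have : (1-(1:ℝ)) • cg F.1 (k+1) + (1:ℝ) • cg F.2 (k+1) =
              (1-θ) • cg F.1 (k+1) + θ • cg F.2 (k+1) := by
            rw [← hrep]; module
          exact (combo_inj hAB1 this).symm
        rw [himp, hθ]; module
      · have hc : ContinuousOn (fun t => (1 - co (cg F.1 (k+1)) (cg F.2 (k+1)) (impact F t k)) •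
            cg F.1 (k+2) + (co (cg F.1 (k+1)) (cg F.2 (k+1)) (impact F t k)) • cg F.2 (k+2))
            (Icc (0:ℝ) 1) := by
          have hcc : ContinuousOn (fun t => co (cg F.1 (k+1)) (cg F.2 (k+1)) (impact F t k))
              (Icc (0:ℝ) 1) := (continuous_co _ _).comp_continuousOn hcont
          exact ((continuousOn_const.sub hcc).smul continuousOn_const).add
            (hcc.smul continuousOn_const)
        refine ContinuousOn.congr hc ?_
        intro t ht
        obtain ⟨θ, _, _, _, himp, hco⟩ := key t ht
        simp only
        rw [himp, ← hco]
      · intro s hs t ht he'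
        have he : impact F s (k+1) = impact F t (k+1) := he'
        obtain ⟨θs, _, _, hreps, himps, _⟩ := key s hs
        obtain ⟨θt, _, _, hrept, himpt, _⟩ := key t ht
        rw [himps, himpt] at he
        have hθ : θs = θt := combo_inj hAB2 he
        refine hinj hs ht ?_
        show impact F s k = impact F t k
        rw [hreps, hrept, hθ]

end ChainMain

section Aux

/-- last step: if mirror k+2 is a point off the mirror-(k+1) line, the impact is constant -/
lemma impact_const {N : ℕ} (F : Beam N) (k : ℕ)
    (hend : cg F.1 (k+2) = cg F.2 (k+2))
    (hAB : cg F.1 (k+1) ≠ cg F.2 (k+1))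
    (hoff : gf (cg F.1 (k+1)) (nvv (cg F.2 (k+1) - cg F.1 (k+1))) (cg F.1 (k+2)) ≠ 0) :
    ∀ t : ℝ, impact F t (k+1) = cg F.1 (k+2) := by
  intro t
  have hQ : (lineThrough (cg F.1 (k+1)) (cg F.1 (k+2)) ∩
      lineThrough (cg F.2 (k+1)) (cg F.2 (k+2))).Nonempty :=
    ⟨cg F.1 (k+2), right_mem_lineThrough _ _, hend ▸ right_mem_lineThrough _ _⟩
  obtain ⟨Q, hQdef⟩ : ∃ Q, Q = pickPt (lineThrough (cg F.1 (k+1)) (cg F.1 (k+2)) ∩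
      lineThrough (cg F.2 (k+1)) (cg F.2 (k+2))) := ⟨_, rfl⟩
  have hQm := pickPt_mem hQ
  rw [← hQdef] at hQm
  obtain ⟨hQa, hQb⟩ := hQm
  rw [← hend] at hQb
  -- show Q = cg F.1 (k+2)
  obtain ⟨u, hu, hgu⟩ := gf_line (cg F.1 (k+1)) (nvv (cg F.2 (k+1) - cg F.1 (k+1))) hQa
  obtain ⟨v, hv, hgv⟩ := gf_line (cg F.1 (k+1)) (nvv (cg F.2 (k+1) - cg F.1 (k+1))) hQb
  rw [gf_self] at hgu
  have hg1B1 : gf (cg F.1 (k+1)) (nvv (cg F.2 (k+1) - cg F.1 (k+1))) (cg F.2 (k+1)) = 0 :=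
    dot_nvv_self _
  rw [hg1B1] at hgv
  have huv : u = v := by
    have h1' : u * gf (cg F.1 (k+1)) (nvv (cg F.2 (k+1) - cg F.1 (k+1))) (cg F.1 (k+2)) =
        v * gf (cg F.1 (k+1)) (nvv (cg F.2 (k+1) - cg F.1 (k+1))) (cg F.1 (k+2)) := by
      nlinarith [hgu, hgv]
    exact mul_right_cancel₀ hoff h1'
  have hu1 : u = 1 := by
    subst huv
    have hz : (1 - u) • (cg F.1 (k+1) - cg F.2 (k+1)) = 0 := by
      have := hu.symm.trans hv
      linear_combination (norm := module) this
    rcases smul_eq_zero.mp hz with h | h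
    · linarith [sub_eq_zero.mp (by linarith [h] : (1:ℝ) - u = 0)]
    · exact absurd (sub_eq_zero.mp h) hAB
  have hQeq : Q = cg F.1 (k+2) := by
    rw [hu, hu1, one_smul]
    module
  have hset : lineThrough (impact F t k) Q ∩ segment ℝ (cg F.1 (k+2)) (cg F.2 (k+2)) =
      {cg F.1 (k+2)} := by
    rw [← hend, segment_same, hQeq]
    rw [Set.inter_eq_self_of_subset_right (by
      intro z hz; rw [mem_singleton_iff] at hz; rw [hz]; exact right_mem_lineThrough _ _)]
  rw [impact_succ_pos F t k hQ, ← hQdef, hset, pickPt_singleton]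

/-- relating heights over a submirror to heights over the mirror -/
lemma sub_gf {A B X Y : Pt} {α β : ℝ}
    (hX : X = (1-α) • A + α • B) (hY : Y = (1-β) • A + β • B) (z : Pt) :
    gf X (nvv (Y - X)) z = (β - α) * gf A (nvv (B - A)) z := by
  have hYX : Y - X = (β - α) • (B - A) := by rw [hX, hY]; module
  rw [gf, hYX, nvv_smul, dot_smul_right]
  congr 1
  have e : dot (z - X) (nvv (B - A)) =
      dot (z - A) (nvv (B - A)) + dot (A - X) (nvv (B - A)) := by
    rw [← dot_add_left]; congr 1; module
  have e2 : A - X = (-α) • (B - A) := by rw [hX]; module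
  rw [gf, e, e2, dot_smul_left, dot_nvv_self, mul_zero, add_zero]

lemma combo_comp (A B : Pt) (l a b : ℝ) :
    (1-l) • ((1-a) • A + a • B) + l • ((1-b) • A + b • B) =
    (1-((1-l)*a + l*b)) • A + ((1-l)*a + l*b) • B := by module

/-- betweenness of impacts (monotone sweep) -/
lemma chain_between {N : ℕ} {F : Beam N} (hF : F ∈ Faisc N) {k : ℕ} (hk : k + 1 ≤ N)
    {ta tb x : ℝ} (h0a : 0 ≤ ta) (hax : ta ≤ x) (hxb : x ≤ tb) (hb1 : tb ≤ 1) :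
    impact F x k ∈ segment ℝ (impact F ta k) (impact F tb k) := by
  obtain ⟨hseg, h0, h1, hcont, hinj⟩ := chain_main hF k hk
  have hAB1 : cg F.1 (k+1) ≠ cg F.2 (k+1) := hF.1.1 (k+1) (by omega) hk
  set f : ℝ → ℝ := fun t => co (cg F.1 (k+1)) (cg F.2 (k+1)) (impact F t k) with hf
  have hrep : ∀ t ∈ Icc (0:ℝ) 1, impact F t k =
      (1 - f t) • cg F.1 (k+1) + f t • cg F.2 (k+1) := by
    intro t ht
    obtain ⟨θ, _, _, hθ⟩ := mem_segment_iff'.mp (hseg t ht)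
    have : f t = θ := by rw [hf]; simp only; rw [hθ, co_combo hAB1]
    rw [this, hθ]
  have htaI : ta ∈ Icc (0:ℝ) 1 := ⟨h0a, by linarith⟩
  have htbI : tb ∈ Icc (0:ℝ) 1 := ⟨by linarith, hb1⟩
  have hxI : x ∈ Icc (0:ℝ) 1 := ⟨by linarith, by linarith⟩
  rcases eq_or_lt_of_le (hax.trans hxb) with heq | hlt
  · have : x = ta := le_antisymm (heq ▸ hxb) hax
    rw [this]; exact left_mem_segment ℝ _ _
  · -- strict mono of f
    have hfc : ContinuousOn f (Icc (0:ℝ) 1) := (continuous_co _ _).comp_continuousOn hcont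
    have hfi : InjOn f (Icc (0:ℝ) 1) := by
      intro s hs t ht hst
      apply hinj hs ht
      show impact F s k = impact F t k
      rw [hrep s hs, hrep t ht, hst]
    have hf0 : f 0 = 0 := by
      rw [hf]; simp only; rw [h0]
      have e : (1-(0:ℝ)) • cg F.1 (k+1) + (0:ℝ) • cg F.2 (k+1) = cg F.1 (k+1) := by module
      nth_rewrite 2 [← e]
      exact co_combo hAB1 0
    have hf1 : f 1 = 1 := by
      rw [hf]; simp only; rw [h1]
      have e : (1-(1:ℝ)) • cg F.1 (k+1) + (1:ℝ) • cg F.2 (k+1) = cg F.2 (k+1) := by module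
      nth_rewrite 2 [← e]
      exact co_combo hAB1 1
    have hmono : StrictMonoOn f (Icc (0:ℝ) 1) :=
      ContinuousOn.strictMonoOn_of_injOn_Icc zero_le_one (by rw [hf0, hf1]; norm_num) hfc hfi
    have hab : f ta < f tb := hmono htaI htbI hlt
    have hax' : f ta ≤ f x := hmono.monotoneOn htaI hxI hax
    have hxb' : f x ≤ f tb := hmono.monotoneOn hxI htbI hxb
    refine mem_segment_iff'.mpr ⟨(f x - f ta) / (f tb - f ta), ?_, ?_, ?_⟩
    · apply div_nonneg (by linarith) (by linarith)
    · rw [div_le_one (by linarith)]; linarith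
    · rw [hrep x hxI, hrep ta htaI, hrep tb htbI, combo_comp]
      have : (1 - (f x - f ta) / (f tb - f ta)) * f ta +
          (f x - f ta) / (f tb - f ta) * f tb = f x := by
        have hne : f tb - f ta ≠ 0 := by linarith
        field_simp
        ring
      rw [this]

lemma branch1_facts {N : ℕ} {F : Beam N} (hF : F ∈ Faisc N) {k : ℕ} (hk2 : k+2 ≤ N)
    (hQ : (lineThrough (cg F.1 (k+1)) (cg F.1 (k+2)) ∩
      lineThrough (cg F.2 (k+1)) (cg F.2 (k+2))).Nonempty)
    {Q : Pt} (hQdef : Q = pickPt (lineThrough (cg F.1 (k+1)) (cg F.1 (k+2)) ∩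
      lineThrough (cg F.2 (k+1)) (cg F.2 (k+2)))) :
    gf (cg F.1 (k+2)) (nvv (cg F.2 (k+2) - cg F.1 (k+2))) Q ≠ 0 ∧
    gf (cg F.1 (k+1)) (nvv (cg F.2 (k+1) - cg F.1 (k+1))) Q ≠ 0 ∧
    ∀ t ∈ Icc (0:ℝ) 1,
      (impact F t (k+1) ∈ lineThrough (impact F t k) Q ∩
        segment ℝ (cg F.1 (k+2)) (cg F.2 (k+2))) ∧
      ∀ z ∈ lineThrough (impact F t k) Q ∩ segment ℝ (cg F.1 (k+2)) (cg F.2 (k+2)),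
        z = impact F t (k+1) := by
  have hk1 : k + 1 ≤ N := by omega
  obtain ⟨hseg, h0, h1, hcont, hinj⟩ := chain_main hF k hk1
  have hAB1 : cg F.1 (k+1) ≠ cg F.2 (k+1) := hF.1.1 (k+1) (by omega) hk1
  have hAB2 : cg F.1 (k+2) ≠ cg F.2 (k+2) := hF.1.1 (k+2) (by omega) hk2
  have rp2 := beam_refl hF (i := k+2) (by omega) hk2
  have rp1 := beam_refl hF (i := k+1) (by omega) hk1
  simp only [hh, show k+2-1 = k+1 from rfl, show k+1-1 = k from rfl,
    show k+1+1 = k+2 from rfl, show k+2+1 = k+3 from rfl] at rp1 rp2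
  have hg2A2 : gf (cg F.1 (k+2)) (nvv (cg F.2 (k+2) - cg F.1 (k+2))) (cg F.1 (k+2)) = 0 :=
    gf_self _ _
  have hg2B2 : gf (cg F.1 (k+2)) (nvv (cg F.2 (k+2) - cg F.1 (k+2))) (cg F.2 (k+2)) = 0 :=
    dot_nvv_self _
  have hg1A1 : gf (cg F.1 (k+1)) (nvv (cg F.2 (k+1) - cg F.1 (k+1))) (cg F.1 (k+1)) = 0 :=
    gf_self _ _
  have hg1B1 : gf (cg F.1 (k+1)) (nvv (cg F.2 (k+1) - cg F.1 (k+1))) (cg F.2 (k+1)) = 0 :=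
    dot_nvv_self _
  have hg2A1 : gf (cg F.1 (k+2)) (nvv (cg F.2 (k+2) - cg F.1 (k+2))) (cg F.1 (k+1)) ≠ 0 :=
    left_ne_of_prod rp2.1
  have hg2B1 : gf (cg F.1 (k+2)) (nvv (cg F.2 (k+2) - cg F.1 (k+2))) (cg F.2 (k+1)) ≠ 0 :=
    right_ne_of_prod rp2.1
  have hg2prev : ∀ t ∈ Icc (0:ℝ) 1,
      0 < gf (cg F.1 (k+2)) (nvv (cg F.2 (k+2) - cg F.1 (k+2))) (cg F.1 (k+1)) *
        gf (cg F.1 (k+2)) (nvv (cg F.2 (k+2) - cg F.1 (k+2))) (impact F t k) :=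
    fun t ht => seg_sign rp2.1 (hseg t ht)
  have hQm := pickPt_mem hQ
  rw [← hQdef] at hQm
  obtain ⟨hQa, hQb⟩ := hQm
  have hQ2 : gf (cg F.1 (k+2)) (nvv (cg F.2 (k+2) - cg F.1 (k+2))) Q ≠ 0 := by
    intro h0'
    have hA : Q = cg F.1 (k+2) :=
      line_zero_unique hg2A1 hQa (right_mem_lineThrough _ _) h0' hg2A2
    have hB : Q = cg F.2 (k+2) :=
      line_zero_unique hg2B1 hQb (right_mem_lineThrough _ _) h0' hg2B2
    exact hAB2 (hA ▸ hB ▸ rfl)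
  have hQ1 : gf (cg F.1 (k+1)) (nvv (cg F.2 (k+1) - cg F.1 (k+1))) Q ≠ 0 := by
    intro h0'
    have hA : Q = cg F.1 (k+1) := line_hit0 hg1A1 (right_ne_of_prod rp1.2.1) hQa h0'
    have hB : Q = cg F.2 (k+1) :=
      line_hit0 hg1B1 (right_ne_of_prod (prod_pos_trans rp1.1 rp1.2.2)) hQb h0'
    exact hAB1 (hA ▸ hB ▸ rfl)
  have hSne : ∀ t ∈ Icc (0:ℝ) 1,
      (lineThrough (impact F t k) Q ∩ segment ℝ (cg F.1 (k+2)) (cg F.2 (k+2))).Nonempty := by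
    intro t ht
    by_contra hS
    have himp : impact F t (k+1) = 0 := by
      rw [impact_succ_pos F t k hQ, ← hQdef]
      exact pickPt_empty hS
    have hNO := hF.2.1 (k+2) hk2 t ht 1 le_rfl (by omega) (by omega) (by omega)
    have h0ray : (0:Pt) ∈ ray (tChain F t) (k+2) := by
      rw [ray, if_neg (by omega : ¬ (k+2) = 0)]
      rw [tChain_cg F t (by omega) (by omega : k+2 < N+2)]
      rw [show k+2-1 = k+1 from rfl, himp]
      exact left_mem_segment ℝ _ _
    have h0m : (0:Pt) ∈ mirror F 1 := by
      rw [mirror, ← pt_zero, ← hF.1.2.2.2.2]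
      exact midpoint_mem_segment _ _
    have : (0:Pt) ∈ ray (tChain F t) (k+2) ∩ mirror F 1 := ⟨h0ray, h0m⟩
    rw [hNO] at this
    exact this
  have hSin : ∀ t ∈ Icc (0:ℝ) 1, impact F t (k+1) ∈
      lineThrough (impact F t k) Q ∩ segment ℝ (cg F.1 (k+2)) (cg F.2 (k+2)) := by
    intro t ht
    rw [impact_succ_pos F t k hQ, ← hQdef]
    exact pickPt_mem (hSne t ht)
  refine ⟨hQ2, hQ1, fun t ht => ⟨hSin t ht, fun z hz => ?_⟩⟩
  exact line_zero_unique (right_ne_of_prod (hg2prev t ht)) hz.1 (hSin t ht).1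
    (segment_sub_zero hg2A2 hg2B2 hz.2) (segment_sub_zero hg2A2 hg2B2 (hSin t ht).2)

lemma branch2_facts {N : ℕ} {F : Beam N} (hF : F ∈ Faisc N) {k : ℕ} (hk2 : k+2 ≤ N)
    (hQ : ¬ (lineThrough (cg F.1 (k+1)) (cg F.1 (k+2)) ∩
      lineThrough (cg F.2 (k+1)) (cg F.2 (k+2))).Nonempty) :
    ∀ t ∈ Icc (0:ℝ) 1, ∃ θ : ℝ, 0 ≤ θ ∧ θ ≤ 1 ∧
      impact F t k = (1-θ) • cg F.1 (k+1) + θ • cg F.2 (k+1) ∧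
      impact F t (k+1) = (1-θ) • cg F.1 (k+2) + θ • cg F.2 (k+2) := by
  have hk1 : k + 1 ≤ N := by omega
  obtain ⟨hseg, h0, h1, hcont, hinj⟩ := chain_main hF k hk1
  have hAB1 : cg F.1 (k+1) ≠ cg F.2 (k+1) := hF.1.1 (k+1) (by omega) hk1
  intro t ht
  obtain ⟨θ, h0θ, h1θ, hrep⟩ := mem_segment_iff'.mp (hseg t ht)
  refine ⟨θ, h0θ, h1θ, hrep, ?_⟩
  rw [impact_succ_neg F t k hQ]
  have hset : {l : ℝ | impact F t k = (1 - l) • cg F.1 (k+1) + l • cg F.2 (k+1)} = {θ} := by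
    ext l
    simp only [mem_setOf_eq, mem_singleton_iff]
    constructor
    · intro h
      exact combo_inj hAB1 (h.symm.trans hrep)
    · rintro rfl; exact hrep
  rw [hset, pickR_singleton]

end Aux

section SubChain

lemma impact_last {N : ℕ} {F : Beam N} (hN : 1 ≤ N) (hF : F ∈ Faisc N) :
    ∀ t : ℝ, impact F t N = cg F.1 (N+1) := by
  obtain ⟨m, rfl⟩ : ∃ m, N = m + 1 := ⟨N-1, by omega⟩
  apply impact_const
  · exact hF.1.2.2.2.1
  · exact hF.1.1 (m+1) (by omega) (by omega)
  · have rp := beam_refl hF (i := m+1) (by omega) (by omega)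
    simp only [hh, show m+1-1 = m from rfl, show m+1+1 = m+2 from rfl] at rp
    exact right_ne_of_prod rp.2.1

lemma subBeam_cga {N : ℕ} (F : Beam N) (μ : ℝ) {i : ℕ} (h1 : 1 ≤ i) (h2 : i < N+2) :
    cg (subBeam F μ).1 i = impact F ((1-μ)/2) (i-1) := by
  rw [cg, dif_pos h2]
  show (if i = 0 then pt (-1) 0 else tChain F ((1-μ)/2) ⟨i, h2⟩) = _
  rw [if_neg (by omega)]
  rw [tChain]
  show (if i = 0 then _ else impact F ((1-μ)/2) (i-1)) = _
  rw [if_neg (by omega)]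

lemma subBeam_cgb {N : ℕ} (F : Beam N) (μ : ℝ) {i : ℕ} (h1 : 1 ≤ i) (h2 : i < N+2) :
    cg (subBeam F μ).2 i = impact F ((1+μ)/2) (i-1) := by
  rw [cg, dif_pos h2]
  show (if i = 0 then pt (-1) 0 else tChain F ((1+μ)/2) ⟨i, h2⟩) = _
  rw [if_neg (by omega)]
  rw [tChain]
  show (if i = 0 then _ else impact F ((1+μ)/2) (i-1)) = _
  rw [if_neg (by omega)]

lemma subBeam_cg0a {N : ℕ} (F : Beam N) (μ : ℝ) : cg (subBeam F μ).1 0 = pt (-1) 0 := rfl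

lemma subBeam_cg0b {N : ℕ} (F : Beam N) (μ : ℝ) : cg (subBeam F μ).2 0 = pt (-1) 0 := rfl

theorem sub_chain {N : ℕ} {F : Beam N} (hN : 1 ≤ N) (hF : F ∈ Faisc N)
    {μ : ℝ} (hμ0 : 0 < μ) (hμ1 : μ ≤ 1) :
    ∀ k, k ≤ N → ∀ s ∈ Icc (0:ℝ) 1,
      impact (subBeam F μ) s k = impact F ((1-μ)/2 + s * μ) k := by
  have hta0 : (0:ℝ) ≤ (1-μ)/2 := by linarith
  have htb1 : (1+μ)/2 ≤ 1 := by linarith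
  have htaI : (1-μ)/2 ∈ Icc (0:ℝ) 1 := ⟨hta0, by linarith⟩
  have htbI : (1+μ)/2 ∈ Icc (0:ℝ) 1 := ⟨by linarith, htb1⟩
  have htatb : (1-μ)/2 ≠ (1+μ)/2 := by intro h; nlinarith [h]
  intro k
  induction k with
  | zero =>
    intro _ s hs
    rw [impact_zero, impact_zero,
      subBeam_cga F μ (le_refl 1) (by omega), subBeam_cgb F μ (le_refl 1) (by omega)]
    rw [show (1:ℕ) - 1 = 0 from rfl, impact_zero, impact_zero]
    match_scalars <;> ring
  | succ k IH =>
    intro hk s hs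
    have hkN : k ≤ N := by omega
    have hk1 : k + 1 ≤ N := hk
    have hσa : (1-μ)/2 ≤ (1-μ)/2 + s*μ := by nlinarith [hs.1]
    have hσb : (1-μ)/2 + s*μ ≤ (1+μ)/2 := by nlinarith [hs.2]
    have hσI : (1-μ)/2 + s*μ ∈ Icc (0:ℝ) 1 := ⟨by linarith, by linarith⟩
    obtain ⟨hseg, h0F, h1F, hcont, hinj⟩ := chain_main hF k hk1
    have hAB1 : cg F.1 (k+1) ≠ cg F.2 (k+1) := hF.1.1 (k+1) (by omega) hk1
    have hX1Y1 : impact F ((1-μ)/2) k ≠ impact F ((1+μ)/2) k := by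
      intro h
      exact htatb (hinj htaI htbI h)
    have hc1a : cg (subBeam F μ).1 (k+1) = impact F ((1-μ)/2) k :=
      subBeam_cga F μ (by omega) (by omega)
    have hc1b : cg (subBeam F μ).2 (k+1) = impact F ((1+μ)/2) k :=
      subBeam_cgb F μ (by omega) (by omega)
    have hc2a : cg (subBeam F μ).1 (k+2) = impact F ((1-μ)/2) (k+1) :=
      subBeam_cga F μ (by omega) (by omega)
    have hc2b : cg (subBeam F μ).2 (k+2) = impact F ((1+μ)/2) (k+1) :=
      subBeam_cgb F μ (by omega) (by omega)
    rcases Nat.lt_or_ge N (k+2) with hc | hc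
    · -- final step : k+1 = N
      have hkN' : k + 1 = N := by omega
      have hlast : ∀ t : ℝ, impact F t (k+1) = cg F.1 (k+2) := by
        subst hkN'
        exact impact_last hN hF
      -- reps of the two endpoints on mirror k+1
      obtain ⟨α, hα0, hα1, hXrep⟩ := mem_segment_iff'.mp (hseg _ htaI)
      obtain ⟨β, hβ0, hβ1, hYrep⟩ := mem_segment_iff'.mp (hseg _ htbI)
      have hsub : ∀ t : ℝ, impact (subBeam F μ) t (k+1) = cg (subBeam F μ).1 (k+2) := by
        apply impact_const
        · rw [hc2a, hc2b, hlast, hlast]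
        · rw [hc1a, hc1b]; exact hX1Y1
        · rw [hc1a, hc1b, hc2a, hlast]
          rw [sub_gf hXrep hYrep]
          have hαβ : β - α ≠ 0 := by
            intro h
            apply hX1Y1
            rw [hXrep, hYrep, show α = β by linarith]
          apply mul_ne_zero hαβ
          have rp := beam_refl hF (i := k+1) (by omega) hk1
          simp only [hh, show k+1-1 = k from rfl, show k+1+1 = k+2 from rfl] at rp
          exact right_ne_of_prod rp.2.1
      rw [hsub s, hc2a, hlast, hlast]
    · -- middle step : k+2 ≤ N
      have hk2 : k + 2 ≤ N := by omega
      have rp2 := beam_refl hF (i := k+2) (by omega) hk2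
      have rp1 := beam_refl hF (i := k+1) (by omega) hk1
      simp only [hh, show k+2-1 = k+1 from rfl, show k+1-1 = k from rfl,
        show k+1+1 = k+2 from rfl, show k+2+1 = k+3 from rfl] at rp1 rp2
      have hg2A2 : gf (cg F.1 (k+2)) (nvv (cg F.2 (k+2) - cg F.1 (k+2))) (cg F.1 (k+2)) = 0 :=
        gf_self _ _
      have hg2B2 : gf (cg F.1 (k+2)) (nvv (cg F.2 (k+2) - cg F.1 (k+2))) (cg F.2 (k+2)) = 0 :=
        dot_nvv_self _
      have hg1A1 : gf (cg F.1 (k+1)) (nvv (cg F.2 (k+1) - cg F.1 (k+1))) (cg F.1 (k+1)) = 0 :=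
        gf_self _ _
      have hg1B1 : gf (cg F.1 (k+1)) (nvv (cg F.2 (k+1) - cg F.1 (k+1))) (cg F.2 (k+1)) = 0 :=
        dot_nvv_self _
      obtain ⟨hsegk1, h0k1, h1k1, _, _⟩ := chain_main hF (k+1) hk2
      have hX2seg : impact F ((1-μ)/2) (k+1) ∈ segment ℝ (cg F.1 (k+2)) (cg F.2 (k+2)) :=
        hsegk1 _ htaI
      have hY2seg : impact F ((1+μ)/2) (k+1) ∈ segment ℝ (cg F.1 (k+2)) (cg F.2 (k+2)) :=
        hsegk1 _ htbI
      have hg2X1 : gf (cg F.1 (k+2)) (nvv (cg F.2 (k+2) - cg F.1 (k+2)))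
          (impact F ((1-μ)/2) k) ≠ 0 :=
        right_ne_of_prod (seg_sign rp2.1 (hseg _ htaI))
      have hg2Y1 : gf (cg F.1 (k+2)) (nvv (cg F.2 (k+2) - cg F.1 (k+2)))
          (impact F ((1+μ)/2) k) ≠ 0 :=
        right_ne_of_prod (seg_sign rp2.1 (hseg _ htbI))
      have hg1X1 : gf (cg F.1 (k+1)) (nvv (cg F.2 (k+1) - cg F.1 (k+1)))
          (impact F ((1-μ)/2) k) = 0 := segment_sub_zero hg1A1 hg1B1 (hseg _ htaI)
      have hg1Y1 : gf (cg F.1 (k+1)) (nvv (cg F.2 (k+1) - cg F.1 (k+1)))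
          (impact F ((1+μ)/2) k) = 0 := segment_sub_zero hg1A1 hg1B1 (hseg _ htbI)
      by_cases hQ : (lineThrough (cg F.1 (k+1)) (cg F.1 (k+2)) ∩
          lineThrough (cg F.2 (k+1)) (cg F.2 (k+2))).Nonempty
      · -- branch 1
        obtain ⟨Q, hQdef⟩ : ∃ Q, Q = pickPt (lineThrough (cg F.1 (k+1)) (cg F.1 (k+2)) ∩
            lineThrough (cg F.2 (k+1)) (cg F.2 (k+2))) := ⟨_, rfl⟩
        obtain ⟨hQ2, hQ1, hS⟩ := branch1_facts hF hk2 hQ hQdef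
        have hX2line : impact F ((1-μ)/2) (k+1) ∈ lineThrough (impact F ((1-μ)/2) k) Q :=
          ((hS _ htaI).1).1
        have hY2line : impact F ((1+μ)/2) (k+1) ∈ lineThrough (impact F ((1+μ)/2) k) Q :=
          ((hS _ htbI).1).1
        have hg2X2 : gf (cg F.1 (k+2)) (nvv (cg F.2 (k+2) - cg F.1 (k+2)))
            (impact F ((1-μ)/2) (k+1)) = 0 := segment_sub_zero hg2A2 hg2B2 hX2seg
        have hg2Y2 : gf (cg F.1 (k+2)) (nvv (cg F.2 (k+2) - cg F.1 (k+2)))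
            (impact F ((1+μ)/2) (k+1)) = 0 := segment_sub_zero hg2A2 hg2B2 hY2seg
        have hX2X1 : impact F ((1-μ)/2) (k+1) ≠ impact F ((1-μ)/2) k :=
          ne_of_gf hg2X2 hg2X1
        have hY2Y1 : impact F ((1+μ)/2) (k+1) ≠ impact F ((1+μ)/2) k :=
          ne_of_gf hg2Y2 hg2Y1
        have hlineX : lineThrough (impact F ((1-μ)/2) k) (impact F ((1-μ)/2) (k+1)) =
            lineThrough (impact F ((1-μ)/2) k) Q :=
          lineThrough_eq_of_mem hX2line hX2X1
        have hlineY : lineThrough (impact F ((1+μ)/2) k) (impact F ((1+μ)/2) (k+1)) =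
            lineThrough (impact F ((1+μ)/2) k) Q :=
          lineThrough_eq_of_mem hY2line hY2Y1
        have hQX : Q ∈ lineThrough (impact F ((1-μ)/2) k) (impact F ((1-μ)/2) (k+1)) := by
          rw [hlineX]; exact right_mem_lineThrough _ _
        have hQY : Q ∈ lineThrough (impact F ((1+μ)/2) k) (impact F ((1+μ)/2) (k+1)) := by
          rw [hlineY]; exact right_mem_lineThrough _ _
        have hsingle : lineThrough (impact F ((1-μ)/2) k) (impact F ((1-μ)/2) (k+1)) ∩
            lineThrough (impact F ((1+μ)/2) k) (impact F ((1+μ)/2) (k+1)) = {Q} := by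
          apply Set.eq_singleton_iff_unique_mem.mpr
          refine ⟨⟨hQX, hQY⟩, ?_⟩
          intro z hz
          rw [hlineX, hlineY] at hz
          obtain ⟨u, hu, hgu⟩ := gf_line (cg F.1 (k+1)) (nvv (cg F.2 (k+1) - cg F.1 (k+1))) hz.1
          obtain ⟨v, hv, hgv⟩ := gf_line (cg F.1 (k+1)) (nvv (cg F.2 (k+1) - cg F.1 (k+1))) hz.2
          rw [hg1X1] at hgu
          rw [hg1Y1] at hgv
          have e1 : gf (cg F.1 (k+1)) (nvv (cg F.2 (k+1) - cg F.1 (k+1))) z =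
              u * gf (cg F.1 (k+1)) (nvv (cg F.2 (k+1) - cg F.1 (k+1))) Q := by
            rw [hgu]; ring
          have e2 : gf (cg F.1 (k+1)) (nvv (cg F.2 (k+1) - cg F.1 (k+1))) z =
              v * gf (cg F.1 (k+1)) (nvv (cg F.2 (k+1) - cg F.1 (k+1))) Q := by
            rw [hgv]; ring
          have huv : u = v := mul_right_cancel₀ hQ1 (e1.symm.trans e2)
          rw [← huv] at hv
          have hz0 : (1 - u) • (impact F ((1-μ)/2) k - impact F ((1+μ)/2) k) = 0 := by
            linear_combination (norm := module) hv - hu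
          rcases smul_eq_zero.mp hz0 with h | h
          · have hu1 : u = 1 := by
              have : (1:ℝ) - u = 0 := h
              linarith
            rw [hu, hu1]; module
          · exact absurd (sub_eq_zero.mp h) hX1Y1
        have hQsub : (lineThrough (cg (subBeam F μ).1 (k+1)) (cg (subBeam F μ).1 (k+2)) ∩
            lineThrough (cg (subBeam F μ).2 (k+1)) (cg (subBeam F μ).2 (k+2))).Nonempty := by
          rw [hc1a, hc1b, hc2a, hc2b]
          exact ⟨Q, hQX, hQY⟩
        rw [impact_succ_pos (subBeam F μ) s k hQsub]
        rw [hc1a, hc1b, hc2a, hc2b, IH hkN s hs]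
        rw [hsingle, pickPt_singleton]
        -- goal : pickPt (lineThrough (impact F σ k) Q ∩ segment X2 Y2) = impact F σ (k+1)
        have hmemσ : impact F ((1-μ)/2 + s*μ) (k+1) ∈
            lineThrough (impact F ((1-μ)/2 + s*μ) k) Q ∩
            segment ℝ (impact F ((1-μ)/2) (k+1)) (impact F ((1+μ)/2) (k+1)) :=
          ⟨((hS _ hσI).1).1, chain_between hF hk2 hta0 hσa hσb htb1⟩
        have hsub2 : segment ℝ (impact F ((1-μ)/2) (k+1)) (impact F ((1+μ)/2) (k+1)) ⊆
            segment ℝ (cg F.1 (k+2)) (cg F.2 (k+2)) :=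
          (convex_segment _ _).segment_subset hX2seg hY2seg
        have hsingle2 : lineThrough (impact F ((1-μ)/2 + s*μ) k) Q ∩
            segment ℝ (impact F ((1-μ)/2) (k+1)) (impact F ((1+μ)/2) (k+1)) =
            {impact F ((1-μ)/2 + s*μ) (k+1)} := by
          apply Set.eq_singleton_iff_unique_mem.mpr
          refine ⟨hmemσ, ?_⟩
          intro z hz
          exact line_zero_unique (right_ne_of_prod (seg_sign rp2.1 (hseg _ hσI)))
            hz.1 hmemσ.1 (segment_sub_zero hg2A2 hg2B2 (hsub2 hz.2))
            (segment_sub_zero hg2A2 hg2B2 (hsub2 hmemσ.2))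
        rw [hsingle2, pickPt_singleton]
      · -- branch 2
        obtain ⟨α, hα0, hα1, hXrep1, hXrep2⟩ := branch2_facts hF hk2 hQ _ htaI
        obtain ⟨β, hβ0, hβ1, hYrep1, hYrep2⟩ := branch2_facts hF hk2 hQ _ htbI
        obtain ⟨θ, hθ0, hθ1, hPrep1, hPrep2⟩ := branch2_facts hF hk2 hQ _ hσI
        have hg1A2 : gf (cg F.1 (k+1)) (nvv (cg F.2 (k+1) - cg F.1 (k+1))) (cg F.1 (k+2)) ≠ 0 :=
          right_ne_of_prod rp1.2.1
        have hg1B2 : gf (cg F.1 (k+1)) (nvv (cg F.2 (k+1) - cg F.1 (k+1))) (cg F.2 (k+2)) ≠ 0 :=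
          right_ne_of_prod (prod_pos_trans rp1.1 rp1.2.2)
        have hdA : cg F.1 (k+2) - cg F.1 (k+1) ≠ 0 :=
          sub_ne_zero.mpr (ne_of_gf hg1A1 hg1A2).symm
        have hdet : (cg F.1 (k+2) 0 - cg F.1 (k+1) 0) * (cg F.2 (k+2) 1 - cg F.2 (k+1) 1) -
            (cg F.1 (k+2) 1 - cg F.1 (k+1) 1) * (cg F.2 (k+2) 0 - cg F.2 (k+1) 0) = 0 := by
          by_contra h
          exact hQ (lines_meet h)
        have hpar : cg F.2 (k+2) - cg F.2 (k+1) =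
            (dot (cg F.1 (k+2) - cg F.1 (k+1)) (cg F.2 (k+2) - cg F.2 (k+1)) /
              dot (cg F.1 (k+2) - cg F.1 (k+1)) (cg F.1 (k+2) - cg F.1 (k+1))) •
            (cg F.1 (k+2) - cg F.1 (k+1)) := by
          apply det_zero_parallel hdA
          simpa [pt_sub_apply] using hdet
        set c : ℝ := dot (cg F.1 (k+2) - cg F.1 (k+1)) (cg F.2 (k+2) - cg F.2 (k+1)) /
            dot (cg F.1 (k+2) - cg F.1 (k+1)) (cg F.1 (k+2) - cg F.1 (k+1)) with hcdef
        have hαβ : α ≠ β := by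
          intro h
          apply hX1Y1
          rw [hXrep1, hYrep1, h]
        -- X2 - X1 and Y2 - Y1 as multiples of d
        have eX : impact F ((1-μ)/2) (k+1) - impact F ((1-μ)/2) k =
            ((1-α) + α * c) • (cg F.1 (k+2) - cg F.1 (k+1)) := by
          have e1 : impact F ((1-μ)/2) (k+1) - impact F ((1-μ)/2) k =
              (1-α) • (cg F.1 (k+2) - cg F.1 (k+1)) + α • (cg F.2 (k+2) - cg F.2 (k+1)) := by
            rw [hXrep1, hXrep2]; module
          rw [e1, hpar]; module
        have eY : impact F ((1+μ)/2) (k+1) - impact F ((1+μ)/2) k =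
            ((1-β) + β * c) • (cg F.1 (k+2) - cg F.1 (k+1)) := by
          have e1 : impact F ((1+μ)/2) (k+1) - impact F ((1+μ)/2) k =
              (1-β) • (cg F.1 (k+2) - cg F.1 (k+1)) + β • (cg F.2 (k+2) - cg F.2 (k+1)) := by
            rw [hYrep1, hYrep2]; module
          rw [e1, hpar]; module
        have hQsub : ¬ (lineThrough (cg (subBeam F μ).1 (k+1)) (cg (subBeam F μ).1 (k+2)) ∩
            lineThrough (cg (subBeam F μ).2 (k+1)) (cg (subBeam F μ).2 (k+2))).Nonempty := by
          rw [hc1a, hc1b, hc2a, hc2b]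
          rintro ⟨z, ⟨u, hu⟩, ⟨v, hv⟩⟩
          have hu' : z = impact F ((1-μ)/2) k +
              (u * ((1-α) + α * c)) • (cg F.1 (k+2) - cg F.1 (k+1)) := by
            rw [hu, eX]; module
          have hv' : z = impact F ((1+μ)/2) k +
              (v * ((1-β) + β * c)) • (cg F.1 (k+2) - cg F.1 (k+1)) := by
            rw [hv, eY]; module
          have e3 : impact F ((1-μ)/2) k - impact F ((1+μ)/2) k =
              (α - β) • (cg F.2 (k+1) - cg F.1 (k+1)) := by
            rw [hXrep1, hYrep1]; module
          have h4 : (α - β) • (cg F.2 (k+1) - cg F.1 (k+1)) =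
              (v * ((1-β) + β * c) - u * ((1-α) + α * c)) •
                (cg F.1 (k+2) - cg F.1 (k+1)) := by
            rw [← e3]
            linear_combination (norm := module) hv' - hu'
          have hαβ' : α - β ≠ 0 := sub_ne_zero.mpr hαβ
          have h5 : cg F.2 (k+1) - cg F.1 (k+1) =
              (α - β)⁻¹ • ((α - β) • (cg F.2 (k+1) - cg F.1 (k+1))) :=
            (inv_smul_smul₀ hαβ' _).symm
          rw [h4] at h5
          apply hQ
          refine ⟨cg F.2 (k+1), ⟨(α - β)⁻¹ * (v * ((1-β) + β * c) - u * ((1-α) + α * c)), ?_⟩,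
            left_mem_lineThrough _ _⟩
          linear_combination (norm := module) h5
        rw [impact_succ_neg (subBeam F μ) s k hQsub]
        rw [hc1a, hc1b, hc2a, hc2b, IH hkN s hs]
        -- representation of impact F σ k in the X1,Y1 coordinates
        have hPseg : impact F ((1-μ)/2 + s*μ) k ∈
            segment ℝ (impact F ((1-μ)/2) k) (impact F ((1+μ)/2) k) :=
          chain_between hF hk1 hta0 hσa hσb htb1
        obtain ⟨l0, hl00, hl01, hl0rep⟩ := mem_segment_iff'.mp hPseg
        have hset : {l : ℝ | impact F ((1-μ)/2 + s*μ) k =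
            (1 - l) • impact F ((1-μ)/2) k + l • impact F ((1+μ)/2) k} = {l0} := by
          ext l
          simp only [mem_setOf_eq, mem_singleton_iff]
          constructor
          · intro h
            exact combo_inj hX1Y1 (h.symm.trans hl0rep)
          · rintro rfl; exact hl0rep
        rw [hset, pickR_singleton]
        -- now the algebra
        have hm : (1-l0)*α + l0*β = θ := by
          apply combo_inj hAB1
          rw [← combo_comp]
          rw [← hXrep1, ← hYrep1, ← hl0rep, hPrep1]
        rw [hXrep2, hYrep2, combo_comp, hm, hPrep2]

end SubChain

section Assemble

lemma sub_seg_mem {N : ℕ} {F : Beam N} (hN : 1 ≤ N) (hF : F ∈ Faisc N)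
    {μ : ℝ} (hμ0 : 0 < μ) (hμ1 : μ ≤ 1) :
    ∀ i : ℕ, i ≤ N+1 → cg (subBeam F μ).1 i ∈ segment ℝ (cg F.1 i) (cg F.2 i) ∧
      cg (subBeam F μ).2 i ∈ segment ℝ (cg F.1 i) (cg F.2 i) := by
  have htaI : (1-μ)/2 ∈ Icc (0:ℝ) 1 := ⟨by linarith, by linarith⟩
  have htbI : (1+μ)/2 ∈ Icc (0:ℝ) 1 := ⟨by linarith, by linarith⟩
  intro i hi
  match i with
  | 0 =>
    rw [subBeam_cg0a, subBeam_cg0b, ← hF.1.2.1]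
    exact ⟨left_mem_segment ℝ _ _, left_mem_segment ℝ _ _⟩
  | (m+1) =>
    rw [subBeam_cga _ _ (by omega) (by omega), subBeam_cgb _ _ (by omega) (by omega),
      show m+1-1 = m from rfl]
    rcases Nat.lt_or_ge m N with hm | hm
    · exact ⟨(chain_main hF m (by omega)).1 _ htaI, (chain_main hF m (by omega)).1 _ htbI⟩
    · have hmN : m = N := by omega
      subst hmN
      rw [impact_last hN hF, impact_last hN hF]
      exact ⟨left_mem_segment ℝ _ _, left_mem_segment ℝ _ _⟩

lemma subBeam_ne {N : ℕ} {F : Beam N} (hN : 1 ≤ N) (hF : F ∈ Faisc N)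
    {μ : ℝ} (hμ0 : 0 < μ) (hμ1 : μ ≤ 1) :
    ∀ k : ℕ, 1 ≤ k → k ≤ N → cg (subBeam F μ).1 k ≠ cg (subBeam F μ).2 k := by
  have htaI : (1-μ)/2 ∈ Icc (0:ℝ) 1 := ⟨by linarith, by linarith⟩
  have htbI : (1+μ)/2 ∈ Icc (0:ℝ) 1 := ⟨by linarith, by linarith⟩
  have htatb : (1-μ)/2 ≠ (1+μ)/2 := by intro h; nlinarith [h]
  intro k hk1 hk2
  obtain ⟨m, rfl⟩ : ∃ m, k = m + 1 := ⟨k-1, by omega⟩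
  rw [subBeam_cga _ _ (by omega) (by omega), subBeam_cgb _ _ (by omega) (by omega),
    show m+1-1 = m from rfl]
  intro h
  exact htatb ((chain_main hF m (by omega)).2.2.2.2 htaI htbI h)

lemma sub_rep {N : ℕ} {F : Beam N} (hN : 1 ≤ N) (hF : F ∈ Faisc N)
    {μ : ℝ} (hμ0 : 0 < μ) (hμ1 : μ ≤ 1) {i : ℕ} (h1 : 1 ≤ i) (h2 : i ≤ N) :
    ∃ α β : ℝ, α ≠ β ∧
      cg (subBeam F μ).1 i = (1-α) • cg F.1 i + α • cg F.2 i ∧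
      cg (subBeam F μ).2 i = (1-β) • cg F.1 i + β • cg F.2 i := by
  have hAB : cg F.1 i ≠ cg F.2 i := hF.1.1 i h1 h2
  obtain ⟨hXs, hYs⟩ := sub_seg_mem hN hF hμ0 hμ1 i (by omega)
  obtain ⟨α, _, _, hα⟩ := mem_segment_iff'.mp hXs
  obtain ⟨β, _, _, hβ⟩ := mem_segment_iff'.mp hYs
  refine ⟨α, β, ?_, hα, hβ⟩
  intro h
  apply subBeam_ne hN hF hμ0 hμ1 i h1 h2
  rw [hα, hβ, h]

theorem subBeam_mem {N : ℕ} {F : Beam N} (hN : 1 ≤ N) (hF : F ∈ Faisc N)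
    {μ : ℝ} (hμ0 : 0 < μ) (hμ1 : μ ≤ 1) : subBeam F μ ∈ Faisc N := by
  have htaI : (1-μ)/2 ∈ Icc (0:ℝ) 1 := ⟨by linarith, by linarith⟩
  have htbI : (1+μ)/2 ∈ Icc (0:ℝ) 1 := ⟨by linarith, by linarith⟩
  refine ⟨⟨subBeam_ne hN hF hμ0 hμ1, subBeam_cg0a F μ, subBeam_cg0b F μ, ?_, ?_⟩, ?_, ?_⟩
  · -- common endpoint
    rw [subBeam_cga _ _ (by omega) (by omega), subBeam_cgb _ _ (by omega) (by omega),
      show N+1-1 = N from rfl, impact_last hN hF, impact_last hN hF]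
  · -- midpoint
    rw [subBeam_cga _ _ (by omega) (by omega), subBeam_cgb _ _ (by omega) (by omega),
      show (1:ℕ)-1 = 0 from rfl]
    have e : impact F ((1-μ)/2) 0 + impact F ((1+μ)/2) 0 = cg F.1 1 + cg F.2 1 := by
      rw [impact_zero, impact_zero]
      match_scalars <;> ring
    rw [midpoint_eq_smul_add, e, ← midpoint_eq_smul_add]
    exact hF.1.2.2.2.2
  · -- NonObscuration
    intro j hj t' ht' k' hk1' hk2' hne1 hne2
    have hsc := sub_chain hN hF hμ0 hμ1
    have hσI : (1-μ)/2 + t'*μ ∈ Icc (0:ℝ) 1 := ⟨by nlinarith [ht'.1], by nlinarith [ht'.2]⟩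
    have hchain : tChain (subBeam F μ) t' = tChain F ((1-μ)/2 + t'*μ) := by
      funext i
      show (if (i:ℕ) = 0 then impact (subBeam F μ) t' 0 + pt (-1) 0
          else impact (subBeam F μ) t' ((i:ℕ)-1)) = _
      by_cases hi : (i:ℕ) = 0
      · rw [if_pos hi, hsc 0 (by omega) t' ht']
        show _ = (if (i:ℕ) = 0 then impact F ((1-μ)/2 + t'*μ) 0 + pt (-1) 0 else _)
        rw [if_pos hi]
      · rw [if_neg hi, hsc ((i:ℕ)-1) (by omega) t' ht']
        show _ = (if (i:ℕ) = 0 then _ else impact F ((1-μ)/2 + t'*μ) ((i:ℕ)-1))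
        rw [if_neg hi]
    have hmir : mirror (subBeam F μ) k' ⊆ mirror F k' := by
      rw [mirror, mirror]
      obtain ⟨h1s, h2s⟩ := sub_seg_mem hN hF hμ0 hμ1 k' hk2'
      exact (convex_segment _ _).segment_subset h1s h2s
    have hNO := hF.2.1 j hj _ hσI k' hk1' hk2' hne1 hne2
    rw [hchain, Set.eq_empty_iff_forall_notMem]
    intro x hx
    have : x ∈ ray (tChain F ((1-μ)/2 + t'*μ)) j ∩ mirror F k' := ⟨hx.1, hmir hx.2⟩
    rw [hNO] at this
    exact this
  · -- ReflexionCond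
    intro i h1 h2
    obtain ⟨m, rfl⟩ : ∃ m, i = m + 1 := ⟨i-1, by omega⟩
    simp only [show m+1-1 = m from rfl]
    obtain ⟨α, β, hαβ, hXrep, hYrep⟩ := sub_rep hN hF hμ0 hμ1 (i := m+1) (by omega) h2
    have hsubne : cg (subBeam F μ).1 (m+1) ≠ cg (subBeam F μ).2 (m+1) :=
      subBeam_ne hN hF hμ0 hμ1 (m+1) (by omega) h2
    have hYX : cg (subBeam F μ).2 (m+1) - cg (subBeam F μ).1 (m+1) ≠ 0 :=
      sub_ne_zero.mpr (Ne.symm hsubne)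
    have hnorm : (0:ℝ) < ‖cg (subBeam F μ).2 (m+1) - cg (subBeam F μ).1 (m+1)‖⁻¹ :=
      inv_pos.mpr (norm_pos_of_ne hYX)
    -- key rewriting of the dot products
    have key1 : ∀ z : Pt, dot (z - cg (subBeam F μ).1 (m+1))
        (normalOf (cg (subBeam F μ).2 (m+1) - cg (subBeam F μ).1 (m+1))) =
        (‖cg (subBeam F μ).2 (m+1) - cg (subBeam F μ).1 (m+1)‖⁻¹ * (β - α)) *
          hh F (m+1) z := by
      intro z
      rw [normalOf_eq, dot_smul_right]
      have : dot (z - cg (subBeam F μ).1 (m+1))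
          (nvv (cg (subBeam F μ).2 (m+1) - cg (subBeam F μ).1 (m+1))) =
          (β - α) * hh F (m+1) z := sub_gf hXrep hYrep z
      rw [this]; ring
    have key2 : ∀ z : Pt, dot (z - cg (subBeam F μ).2 (m+1))
        (normalOf (cg (subBeam F μ).2 (m+1) - cg (subBeam F μ).1 (m+1))) =
        (‖cg (subBeam F μ).2 (m+1) - cg (subBeam F μ).1 (m+1)‖⁻¹ * (β - α)) *
          hh F (m+1) z := by
      intro z
      have e : z - cg (subBeam F μ).2 (m+1) = (z - cg (subBeam F μ).1 (m+1)) -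
          (cg (subBeam F μ).2 (m+1) - cg (subBeam F μ).1 (m+1)) := by module
      rw [e, dot_sub_left, key1, normalOf_eq, dot_smul_right, dot_nvv_self, mul_zero, sub_zero]
    -- heights of the four neighbours are same-signed
    have rp := beam_refl hF (i := m+1) (by omega) h2
    simp only [show m+1-1 = m from rfl, show m+1+1 = m+2 from rfl] at rp
    have hs1 := sub_seg_mem hN hF hμ0 hμ1 m (by omega)
    have hs2 := sub_seg_mem hN hF hμ0 hμ1 (m+2) (by omega)
    have hAm := rp.1
    have hA2 : 0 < hh F (m+1) (cg F.1 (m+2)) * hh F (m+1) (cg F.2 (m+2)) :=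
      prod_pos_trans rp.2.1 rp.2.2
    -- products with hh (cg F.1 m)
    have p1 : 0 < hh F (m+1) (cg F.1 m) * hh F (m+1) (cg (subBeam F μ).1 m) :=
      seg_sign hAm hs1.1
    have p2 : 0 < hh F (m+1) (cg F.1 m) * hh F (m+1) (cg (subBeam F μ).2 m) :=
      seg_sign hAm hs1.2
    have p3' : 0 < hh F (m+1) (cg F.1 (m+2)) * hh F (m+1) (cg (subBeam F μ).1 (m+2)) :=
      seg_sign hA2 hs2.1
    have p4' : 0 < hh F (m+1) (cg F.1 (m+2)) * hh F (m+1) (cg (subBeam F μ).2 (m+2)) :=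
      seg_sign hA2 hs2.2
    have p3 : 0 < hh F (m+1) (cg F.1 m) * hh F (m+1) (cg (subBeam F μ).1 (m+2)) :=
      prod_pos_trans (mul_comm (hh F (m+1) (cg F.1 m)) _ ▸ rp.2.1) p3'
    have p4 : 0 < hh F (m+1) (cg F.1 m) * hh F (m+1) (cg (subBeam F μ).2 (m+2)) :=
      prod_pos_trans (mul_comm (hh F (m+1) (cg F.1 m)) _ ▸ rp.2.1) p4'
    have hK : (‖cg (subBeam F μ).2 (m+1) - cg (subBeam F μ).1 (m+1)‖⁻¹ * (β - α)) ≠ 0 :=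
      mul_ne_zero (ne_of_gt hnorm) (sub_ne_zero.mpr (Ne.symm hαβ))
    have hK2 : 0 < (‖cg (subBeam F μ).2 (m+1) - cg (subBeam F μ).1 (m+1)‖⁻¹ * (β - α)) *
        (‖cg (subBeam F μ).2 (m+1) - cg (subBeam F μ).1 (m+1)‖⁻¹ * (β - α)) :=
      mul_self_pos.mpr hK
    refine ⟨?_, ?_, ?_⟩ <;> simp only [key1, key2]
    · nlinarith [prod_pos_trans p1 p2, hK2]
    · nlinarith [prod_pos_trans p1 p3, hK2]
    · nlinarith [prod_pos_trans p1 p4, hK2]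

end Assemble

section Final

lemma cg_fin {N : ℕ} (c : Chain N) (i : Fin (N+2)) : c i = cg c (i:ℕ) := by
  rw [cg, dif_pos i.isLt]

lemma subBeam_one {N : ℕ} {F : Beam N} (hN : 1 ≤ N) (hF : F ∈ Faisc N) : subBeam F 1 = F := by
  have e0 : ((1:ℝ)-1)/2 = 0 := by norm_num
  have e1 : ((1:ℝ)+1)/2 = 1 := by norm_num
  apply Prod.ext
  · funext i
    show (if (i:ℕ) = 0 then pt (-1) 0 else tChain F ((1-1)/2) i) = F.1 i
    by_cases hi : (i:ℕ) = 0
    · rw [if_pos hi, cg_fin F.1 i, hi]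
      exact hF.1.2.1.symm
    · rw [if_neg hi, e0]
      show (if (i:ℕ) = 0 then _ else impact F 0 ((i:ℕ)-1)) = F.1 i
      rw [if_neg hi, cg_fin F.1 i]
      obtain ⟨m, hm⟩ : ∃ m, (i:ℕ) = m+1 := ⟨(i:ℕ)-1, by omega⟩
      rw [hm, show m+1-1 = m from rfl]
      rcases Nat.lt_or_ge m N with hmN | hmN
      · exact (chain_main hF m (by omega)).2.1
      · have : m = N := by have := i.isLt; omega
        subst this
        exact impact_last hN hF 0
  · funext i
    show (if (i:ℕ) = 0 then pt (-1) 0 else tChain F ((1+1)/2) i) = F.2 i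
    by_cases hi : (i:ℕ) = 0
    · rw [if_pos hi, cg_fin F.2 i, hi]
      exact hF.1.2.2.1.symm
    · rw [if_neg hi, e1]
      show (if (i:ℕ) = 0 then _ else impact F 1 ((i:ℕ)-1)) = F.2 i
      rw [if_neg hi, cg_fin F.2 i]
      obtain ⟨m, hm⟩ : ∃ m, (i:ℕ) = m+1 := ⟨(i:ℕ)-1, by omega⟩
      rw [hm, show m+1-1 = m from rfl]
      rcases Nat.lt_or_ge m N with hmN | hmN
      · exact (chain_main hF m (by omega)).2.2.1
      · have : m = N := by have := i.isLt; omega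
        subst this
        rw [impact_last hN hF 1]
        exact hF.1.2.2.2.1
  
theorem subBeam_contOn {N : ℕ} {F : Beam N} (hN : 1 ≤ N) (hF : F ∈ Faisc N)
    {μ : ℝ} (hμ0 : 0 < μ) (hμ1 : μ ≤ 1) :
    ContinuousOn (fun t : ℝ => subBeam F (1 + t * (μ - 1))) (Icc (0:ℝ) 1) := by
  have hca : Continuous (fun t : ℝ => (1 - (1 + t*(μ-1)))/2) := by continuity
  have hcb : Continuous (fun t : ℝ => (1 + (1 + t*(μ-1)))/2) := by continuity
  have hma : MapsTo (fun t : ℝ => (1 - (1 + t*(μ-1)))/2) (Icc (0:ℝ) 1) (Icc (0:ℝ) 1) := by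
    intro x hx
    constructor
    · simp only [mem_Icc] at hx ⊢
      nlinarith [hx.1, hx.2]
    · simp only [mem_Icc] at hx ⊢
      nlinarith [hx.1, hx.2]
  have hmb : MapsTo (fun t : ℝ => (1 + (1 + t*(μ-1)))/2) (Icc (0:ℝ) 1) (Icc (0:ℝ) 1) := by
    intro x hx
    constructor
    · simp only [mem_Icc] at hx ⊢
      nlinarith [hx.1, hx.2]
    · simp only [mem_Icc] at hx ⊢
      nlinarith [hx.1, hx.2]
  have h1 : ∀ m : ℕ, m ≤ N →
      ContinuousOn (fun t : ℝ => impact F ((1 - (1 + t*(μ-1)))/2) m) (Icc (0:ℝ) 1) ∧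
      ContinuousOn (fun t : ℝ => impact F ((1 + (1 + t*(μ-1)))/2) m) (Icc (0:ℝ) 1) := by
    intro m hm
    rcases Nat.lt_or_ge m N with hmN | hmN
    · have hc := (chain_main hF m (by omega)).2.2.2.1
      exact ⟨hc.comp hca.continuousOn hma, hc.comp hcb.continuousOn hmb⟩
    · have hmN' : m = N := by omega
      subst hmN'
      constructor
      · exact ContinuousOn.congr continuousOn_const
          (fun t _ => impact_last hN hF _)
      · exact ContinuousOn.congr continuousOn_const
          (fun t _ => impact_last hN hF _)
  apply ContinuousOn.prodMk
  · apply continuousOn_pi.mpr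
    intro i
    by_cases hi : (i:ℕ) = 0
    · refine ContinuousOn.congr (continuousOn_const (c := pt (-1) 0)) (fun t _ => ?_)
      show (if (i:ℕ) = 0 then pt (-1) 0 else tChain F ((1 - (1 + t*(μ-1)))/2) i) = pt (-1) 0
      rw [if_pos hi]
    · refine ContinuousOn.congr ((h1 ((i:ℕ)-1) (by have := i.isLt; omega)).1) (fun t _ => ?_)
      show (if (i:ℕ) = 0 then pt (-1) 0 else tChain F ((1 - (1 + t*(μ-1)))/2) i) =
        impact F ((1 - (1 + t*(μ-1)))/2) ((i:ℕ)-1)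
      rw [if_neg hi]
      show (if (i:ℕ) = 0 then impact F ((1 - (1 + t*(μ-1)))/2) 0 + pt (-1) 0
        else impact F ((1 - (1 + t*(μ-1)))/2) ((i:ℕ)-1)) = _
      rw [if_neg hi]
  · apply continuousOn_pi.mpr
    intro i
    by_cases hi : (i:ℕ) = 0
    · refine ContinuousOn.congr (continuousOn_const (c := pt (-1) 0)) (fun t _ => ?_)
      show (if (i:ℕ) = 0 then pt (-1) 0 else tChain F ((1 + (1 + t*(μ-1)))/2) i) = pt (-1) 0
      rw [if_pos hi]
    · refine ContinuousOn.congr ((h1 ((i:ℕ)-1) (by have := i.isLt; omega)).2) (fun t _ => ?_)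
      show (if (i:ℕ) = 0 then pt (-1) 0 else tChain F ((1 + (1 + t*(μ-1)))/2) i) =
        impact F ((1 + (1 + t*(μ-1)))/2) ((i:ℕ)-1)
      rw [if_neg hi]
      show (if (i:ℕ) = 0 then impact F ((1 + (1 + t*(μ-1)))/2) 0 + pt (-1) 0
        else impact F ((1 + (1 + t*(μ-1)))/2) ((i:ℕ)-1)) = _
      rw [if_neg hi]

end Final

/-- the subbeam `F_μ` is a beam, `F_1 = F`, and
`t ↦ F_{1 + t(μ-1)}` is a continuous path in `Faisc^N` from `F` to `F_μ`. -/
theorem statement16 (N : ℕ) (hN : 1 ≤ N) (F : Beam N) (hF : F ∈ Faisc N)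
    (μ : ℝ) (hμ0 : 0 < μ) (hμ1 : μ ≤ 1) :
    subBeam F μ ∈ Faisc N ∧ subBeam F 1 = F ∧
    (∀ t ∈ Icc (0 : ℝ) 1, subBeam F (1 + t * (μ - 1)) ∈ Faisc N) ∧
    ContinuousOn (fun t : ℝ => subBeam F (1 + t * (μ - 1))) (Icc (0 : ℝ) 1) ∧
    JoinedIn (Faisc N) F (subBeam F μ) := by
  
  have hone := subBeam_one hN hF
  have hmem3 : ∀ t ∈ Icc (0:ℝ) 1, subBeam F (1 + t*(μ-1)) ∈ Faisc N := by
    intro t ht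
    apply subBeam_mem hN hF
    · nlinarith [ht.2]
    · nlinarith [ht.1]
  have hcont := subBeam_contOn hN hF hμ0 hμ1
  refine ⟨subBeam_mem hN hF hμ0 hμ1, hone, hmem3, hcont, ?_⟩
  refine ⟨⟨⟨fun t => subBeam F (1 + (t:ℝ)*(μ-1)), ?_⟩, ?_, ?_⟩, ?_⟩
  · exact hcont.comp_continuous continuous_subtype_val (fun t => t.2)
  · show subBeam F (1 + (0:ℝ)*(μ-1)) = F
    rw [show (1:ℝ) + 0*(μ-1) = 1 by ring]
    exact hone
  · show subBeam F (1 + (1:ℝ)*(μ-1)) = subBeam F μ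
    rw [show (1:ℝ) + 1*(μ-1) = μ by ring]
  · intro t
    exact hmem3 (t:ℝ) t.2
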